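/- arXiv:2205.11831 — 10 statements merged into one kernel-verified Lean document; each statement's English description precedes it below -/
import Mathlib

section
/- There exists a bounded linear operator C : H → H with operator norm ‖C‖ ≤ 1 such that B = A^{1/2} ∘ C ∘ A^{1/2}. -/
open scoped InnerProductSpace

open ContinuousLinearMap Submodule

/-!
Since `⟪f, A f⟫ = ‖S f‖²`, positivity of the block form at `(t f, g)` for all real `t` gives
`⟪f, B g⟫ ≤ ‖S f‖ ‖S g‖` (a discriminant argument). Douglas' factorization (domination
`‖T x‖ ≤ c ‖S x‖` lets `T` factor through `S` with norm `≤ c`), applied to the adjoints, writes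
`B = S D` with `‖D g‖ ≤ ‖S g‖`; applied once more it writes `D = C S` with `‖C‖ ≤ 1`.
-/

theorem le_mul_of_forall_quadratic_nonneg {x y b : ℝ} (hx : 0 ≤ x) (hy : 0 ≤ y)
    (h : ∀ t : ℝ, 0 ≤ x ^ 2 * (t * t) + 2 * b * t + y ^ 2) : b ≤ x * y := by
  have hdisc := discrim_le_zero h
  rw [discrim] at hdisc
  exact le_of_sq_le_sq (by nlinarith) (mul_nonneg hx hy)

theorem inner_le_norm_mul_norm_of_block_nonneg {E F G H : Type*}
    [NormedAddCommGroup E] [InnerProductSpace ℝ E] [NormedAddCommGroup F] [NormedSpace ℝ F]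
    [NormedAddCommGroup G] [NormedSpace ℝ G] [NormedAddCommGroup H] [NormedSpace ℝ H]
    (S : E →L[ℝ] F) (R : G →L[ℝ] H) (T : G →L[ℝ] E)
    (h : ∀ f g, 0 ≤ ‖S f‖ ^ 2 + 2 * ⟪f, T g⟫_ℝ + ‖R g‖ ^ 2) (f : E) (g : G) :
    ⟪f, T g⟫_ℝ ≤ ‖S f‖ * ‖R g‖ := by
  refine le_mul_of_forall_quadratic_nonneg (norm_nonneg _) (norm_nonneg _) fun t => ?_
  have := h (t • f) g
  rw [map_smul, norm_smul, mul_pow, Real.norm_eq_abs, sq_abs, real_inner_smul_left] at this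
  linarith

theorem le_of_sq_le_mul {α : Type*} [Ring α] [LinearOrder α] [IsStrictOrderedRing α] {a b : α}
    (hb : 0 ≤ b) (h : a ^ 2 ≤ b * a) : a ≤ b := by
  by_contra! hba
  have := mul_lt_mul_of_pos_right hba (hb.trans_lt hba)
  rw [← sq] at this
  exact h.not_gt this

theorem norm_starProjection_le_of_forall_inner_le {F : Type*} [NormedAddCommGroup F]
    [InnerProductSpace ℝ F] (K : Submodule ℝ F) [K.HasOrthogonalProjection] {v : F} {r : ℝ}
    (hr : 0 ≤ r) (h : ∀ u ∈ K, ⟪u, v⟫_ℝ ≤ ‖u‖ * r) : ‖K.starProjection v‖ ≤ r := by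
  refine le_of_sq_le_mul hr ?_
  calc ‖K.starProjection v‖ ^ 2 = ⟪K.starProjection v, v⟫_ℝ :=
        (K.re_inner_starProjection_eq_normSq v).symm
    _ ≤ ‖K.starProjection v‖ * r := h _ (K.starProjection_apply_mem v)
    _ = r * ‖K.starProjection v‖ := mul_comm _ _

theorem apply_starProjection_closure_range_adjoint {F E : Type*} [NormedAddCommGroup F]
    [InnerProductSpace ℝ F] [NormedAddCommGroup E]
    [InnerProductSpace ℝ E] [CompleteSpace E] [CompleteSpace F] (S : F →L[ℝ] E) (x : F) :
    S ((LinearMap.range (adjoint S : E →ₗ[ℝ] F)).topologicalClosure.starProjection x) = S x := by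
  set K := (LinearMap.range (adjoint S : E →ₗ[ℝ] F)).topologicalClosure
  have hx : x - K.starProjection x ∈ (LinearMap.range (adjoint S : E →ₗ[ℝ] F))ᗮ := by
    rw [← orthogonal_closure]; exact K.sub_starProjection_mem_orthogonal x
  rw [orthogonal_range, adjoint_adjoint] at hx
  have : S (x - K.starProjection x) = 0 := hx
  rw [map_sub, sub_eq_zero] at this
  exact this.symm

theorem exists_norm_le_comp_eq_of_norm_le {𝕜 E F G : Type*} [RCLike 𝕜]
    [NormedAddCommGroup E] [NormedSpace 𝕜 E] [NormedAddCommGroup F] [InnerProductSpace 𝕜 F]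
    [CompleteSpace F] [NormedAddCommGroup G] [NormedSpace 𝕜 G] [CompleteSpace G]
    (S : E →L[𝕜] F) (T : E →L[𝕜] G) {c : ℝ} (hc : 0 ≤ c) (h : ∀ x, ‖T x‖ ≤ c * ‖S x‖) :
    ∃ U : F →L[𝕜] G, ‖U‖ ≤ c ∧ U ∘L S = T := by
  set K := (LinearMap.range (S : E →ₗ[𝕜] F)).topologicalClosure
  have hSK : ∀ x, S x ∈ K := fun x => le_topologicalClosure _ (LinearMap.mem_range_self _ x)
  set e : E →ₗ[𝕜] K := (S : E →ₗ[𝕜] F).codRestrict K hSK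
  have he : DenseRange e := by
    refine Subtype.dense_iff.2 ?_
    rw [← Set.range_comp]
    exact (topologicalClosure_coe _).subset
  refine ⟨(T : E →ₗ[𝕜] G).extendOfNorm e ∘L K.orthogonalProjectionOnto, ?_, ?_⟩
  · calc _ ≤ c * 1 := (opNorm_comp_le _ _).trans <|
            mul_le_mul (LinearMap.opNorm_extendOfNorm_le he hc h)
              K.orthogonalProjectionOnto_norm_le (norm_nonneg _) hc
      _ = c := mul_one c
  · ext x
    have hPS : K.orthogonalProjectionOnto (S x) = e x :=
      orthogonalProjectionOnto_mem_subspace_eq_self (e x)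
    simp only [comp_apply, hPS]
    exact LinearMap.extendOfNorm_eq he ⟨c, h⟩ x

theorem exists_eq_comp_norm_le_of_inner_le {E F G H : Type*}
    [NormedAddCommGroup E] [InnerProductSpace ℝ E] [CompleteSpace E]
    [NormedAddCommGroup F] [InnerProductSpace ℝ F] [CompleteSpace F]
    [NormedAddCommGroup G] [InnerProductSpace ℝ G] [CompleteSpace G]
    [NormedAddCommGroup H] [NormedSpace ℝ H]
    (S : F →L[ℝ] E) (T : G →L[ℝ] E) (R : G →L[ℝ] H)
    (h : ∀ f g, ⟪f, T g⟫_ℝ ≤ ‖adjoint S f‖ * ‖R g‖) :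
    ∃ D : G →L[ℝ] F, T = S ∘L D ∧ ∀ g, ‖D g‖ ≤ ‖R g‖ := by
  have hT : ∀ f, ‖adjoint T f‖ ≤ ‖R‖ * ‖adjoint S f‖ := by
    intro f
    refine le_of_sq_le_mul (by positivity) ?_
    calc ‖adjoint T f‖ ^ 2 = ⟪f, T (adjoint T f)⟫_ℝ := by
          rw [← adjoint_inner_left, real_inner_self_eq_norm_sq]
      _ ≤ ‖adjoint S f‖ * ‖R (adjoint T f)‖ := h f _
      _ ≤ ‖adjoint S f‖ * (‖R‖ * ‖adjoint T f‖) := by gcongr; exact R.le_opNorm _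
      _ = ‖R‖ * ‖adjoint S f‖ * ‖adjoint T f‖ := by ring
  obtain ⟨U, -, hU⟩ := exists_norm_le_comp_eq_of_norm_le (adjoint S) (adjoint T) (norm_nonneg R) hT
  have hTU : T = S ∘L adjoint U := by
    simpa only [adjoint_comp, adjoint_adjoint] using (congrArg adjoint hU).symm
  -- `adjoint U` may leave the closure of the range of `adjoint S`; projecting onto it does not
  -- change `S ∘L adjoint U` and makes the pointwise bound follow from `h` by density.
  set K := (LinearMap.range (adjoint S : E →ₗ[ℝ] F)).topologicalClosure
  refine ⟨K.starProjection ∘L adjoint U, ?_, fun g => ?_⟩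
  · ext g
    rw [hTU, comp_apply, comp_apply, comp_apply, apply_starProjection_closure_range_adjoint]
  · refine norm_starProjection_le_of_forall_inner_le K (norm_nonneg _) fun u hu => ?_
    have hclosed : IsClosed {u : F | ⟪u, adjoint U g⟫_ℝ ≤ ‖u‖ * ‖R g‖} :=
      isClosed_le (by fun_prop) (by fun_prop)
    refine closure_minimal ?_ hclosed hu
    rintro _ ⟨f, rfl⟩
    simp only [Set.mem_ofPred_eq, coe_coe, adjoint_inner_right, ← comp_apply, hU]
    rw [adjoint_inner_left]
    exact h f g

theorem exists_contraction_factorization_general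
    {H : Type*} [NormedAddCommGroup H] [InnerProductSpace ℝ H] [CompleteSpace H]
    (A B S : H →L[ℝ] H)
    (hSsa : IsSelfAdjoint S) (hSsq : S * S = A)
    (hblock : ∀ f g : H, 0 ≤ ⟪f, A f⟫_ℝ + 2 * ⟪f, B g⟫_ℝ + ⟪g, A g⟫_ℝ) :
    ∃ C : H →L[ℝ] H, ‖C‖ ≤ 1 ∧ B = S * C * S := by
  have hA : ∀ f, ⟪f, A f⟫_ℝ = ‖S f‖ ^ 2 := fun f => by
    rw [← hSsq, apply_norm_sq_eq_inner_adjoint_right, hSsa.adjoint_eq]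
    rfl
  have hBS : ∀ f g, ⟪f, B g⟫_ℝ ≤ ‖adjoint S f‖ * ‖S g‖ := by
    rw [hSsa.adjoint_eq]
    exact inner_le_norm_mul_norm_of_block_nonneg S S B fun f g => hA f ▸ hA g ▸ hblock f g
  obtain ⟨D, hBD, hD⟩ := exists_eq_comp_norm_le_of_inner_le S B S hBS
  obtain ⟨C, hC, hCD⟩ :=
    exists_norm_le_comp_eq_of_norm_le S D zero_le_one fun g => (hD g).trans_eq (one_mul _).symm
  exact ⟨C, hC, by rw [hBD, ← hCD]; rfl⟩

/-- Lemma 1 / Baker's theorem: if `A` is a positive self-adjoint bounded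
operator on a real Hilbert space `H` with positive square root `S = A^{1/2}`, and the block
operator `[[A, B], [B*, A]]` is positive, i.e. `⟪f, Af⟫ + 2⟪f, Bg⟫ + ⟪g, Ag⟫ ≥ 0` for all
`f, g`, then there exists a bounded operator `C` with `‖C‖ ≤ 1` and `B = A^{1/2} C A^{1/2}`. -/
theorem exists_contraction_factorization
    {H : Type*} [NormedAddCommGroup H] [InnerProductSpace ℝ H] [CompleteSpace H]
    (A B S : H →L[ℝ] H)
    (hA : IsSelfAdjoint A) (hApos : ∀ f : H, 0 ≤ ⟪f, A f⟫_ℝ)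
    (hSsa : IsSelfAdjoint S) (hSpos : ∀ f : H, 0 ≤ ⟪f, S f⟫_ℝ) (hSsq : S * S = A)
    (hblock : ∀ f g : H, 0 ≤ ⟪f, A f⟫_ℝ + 2 * ⟪f, B g⟫_ℝ + ⟪g, A g⟫_ℝ) :
    ∃ C : H →L[ℝ] H, ‖C‖ ≤ 1 ∧ B = S * C * S :=
  exists_contraction_factorization_general A B S hSsa hSsq hblock
end

section
/- For every λ > 0, the operator Σ + λI − γΣ₁ : H → H is bijective with bounded inverse, and the operator norm of its inverse satisfies ‖(Σ + λI − γΣ₁)^{-1}‖ ≤ 1/λ. -/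
open scoped InnerProductSpace

/-! Writing `γΣ₁ = S (γΣ̃₁) S` with `‖γΣ̃₁‖ ≤ 1` gives
`⟪(Σ + λ - γΣ₁) f, f⟫ = ⟪(1 - γΣ̃₁) S f, S f⟫ + λ‖f‖² ≥ λ‖f‖²`, so the operator is coercive
with constant `λ`. Lax–Milgram, applied to the form `(f, g) ↦ ⟪A f, g⟫` for
`A = Σ + λ - γΣ₁`, makes `A` invertible, and coercivity gives `λ‖f‖ ≤ ‖A f‖`,
i.e. `‖A⁻¹‖ ≤ 1/λ`. -/

namespace ContinuousLinearMap

variable {H : Type*} [NormedAddCommGroup H] [InnerProductSpace ℝ H]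

theorem real_inner_apply_self_le (T : H →L[ℝ] H) (g : H) : ⟪T g, g⟫_ℝ ≤ ‖T‖ * ‖g‖ ^ 2 :=
  calc ⟪T g, g⟫_ℝ ≤ ‖T g‖ * ‖g‖ := real_inner_le_norm _ _
    _ ≤ ‖T‖ * ‖g‖ * ‖g‖ := by gcongr; exact T.le_opNorm g
    _ = ‖T‖ * ‖g‖ ^ 2 := by ring

theorem real_inner_conj_apply_self {S : H →L[ℝ] H} (hS : (S : H →ₗ[ℝ] H).IsSymmetric)
    (K : H →L[ℝ] H) (f : H) : ⟪(S * K * S) f, f⟫_ℝ = ⟪K (S f), S f⟫_ℝ :=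
  hS (K (S f)) f

theorem mul_norm_le_norm_apply_of_coercive {A : H →L[ℝ] H} {c : ℝ}
    (hA : ∀ f, c * ‖f‖ ^ 2 ≤ ⟪A f, f⟫_ℝ) (f : H) : c * ‖f‖ ≤ ‖A f‖ := by
  rcases (norm_nonneg f).eq_or_lt with hf | hf
  · rw [← hf, mul_zero]
    exact norm_nonneg _
  · refine le_of_mul_le_mul_right ?_ hf
    calc c * ‖f‖ * ‖f‖ = c * ‖f‖ ^ 2 := by ring
      _ ≤ ⟪A f, f⟫_ℝ := hA f
      _ ≤ ‖A f‖ * ‖f‖ := real_inner_le_norm _ _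

theorem opNorm_le_of_mul_eq_one_of_lower_bound {A T : H →L[ℝ] H} {c : ℝ} (hc : 0 < c)
    (hA : ∀ f, c * ‖f‖ ≤ ‖A f‖) (hAT : A * T = 1) : ‖T‖ ≤ 1 / c := by
  refine opNorm_le_bound _ (by positivity) fun x => ?_
  rw [div_mul_eq_mul_div, one_mul, le_div_iff₀' hc]
  calc c * ‖T x‖ ≤ ‖A (T x)‖ := hA (T x)
    _ = ‖x‖ := congrArg norm (DFunLike.congr_fun hAT x)

theorem exists_inverse_opNorm_le_of_coercive [CompleteSpace H] {A : H →L[ℝ] H} {c : ℝ}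
    (hc : 0 < c) (hA : ∀ f, c * ‖f‖ ^ 2 ≤ ⟪A f, f⟫_ℝ) :
    ∃ T : H →L[ℝ] H, A * T = 1 ∧ T * A = 1 ∧ ‖T‖ ≤ 1 / c := by
  have hB : IsCoercive ((innerSL ℝ).comp A) :=
    ⟨c, hc, fun f => by simpa [mul_assoc, ← sq] using hA f⟩
  set E := hB.continuousLinearEquivOfBilin
  have hEA : (E : H →L[ℝ] H) = A :=
    ext fun f => (hB.unique_continuousLinearEquivOfBilin fun _ => rfl).symm
  refine ⟨E.symm, ?_, ?_, ?_⟩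
  · rw [← hEA]; ext; simp
  · rw [← hEA]; ext; simp
  · refine opNorm_le_of_mul_eq_one_of_lower_bound hc
      (mul_norm_le_norm_apply_of_coercive hA) ?_
    rw [← hEA]; ext; simp

theorem coercive_mul_self_add_smul_one_sub_conj {S K : H →L[ℝ] H}
    (hS : (S : H →ₗ[ℝ] H).IsSymmetric) (hK : ‖K‖ ≤ 1) (c : ℝ) (f : H) :
    c * ‖f‖ ^ 2 ≤ ⟪(S * S + c • 1 - S * K * S) f, f⟫_ℝ := by
  have hSS : ⟪(S * S) f, f⟫_ℝ = ‖S f‖ ^ 2 := by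
    simpa [real_inner_self_eq_norm_sq] using real_inner_conj_apply_self hS 1 f
  have hKS : ⟪K (S f), S f⟫_ℝ ≤ ‖S f‖ ^ 2 :=
    (K.real_inner_apply_self_le (S f)).trans (by nlinarith [sq_nonneg ‖S f‖])
  have hexpand : ⟪(S * S + c • 1 - S * K * S) f, f⟫_ℝ
      = ⟪(S * S) f, f⟫_ℝ + c * ‖f‖ ^ 2 - ⟪(S * K * S) f, f⟫_ℝ := by
    simp [inner_sub_left, inner_add_left, real_inner_smul_left]
  rw [hexpand, hSS, real_inner_conj_apply_self hS]
  linarith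

end ContinuousLinearMap

theorem regularized_td_operator_invertible_general
    {H : Type*} [NormedAddCommGroup H] [InnerProductSpace ℝ H] [CompleteSpace H]
    (Sig S T1 Sig1 : H →L[ℝ] H)
    (hSsa : IsSelfAdjoint S) (hSsq : S * S = Sig)
    (hT1 : ‖T1‖ ≤ 1) (hSig1 : Sig1 = S * T1 * S)
    (γ : ℝ) (hγ0 : 0 ≤ γ) (hγ1 : γ < 1)
    (lam : ℝ) (hlam : 0 < lam) :
    ∃ T : H →L[ℝ] H,
      (Sig + lam • 1 - γ • Sig1) * T = 1 ∧
      T * (Sig + lam • 1 - γ • Sig1) = 1 ∧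
      ‖T‖ ≤ 1 / lam := by
  have hγT1 : ‖γ • T1‖ ≤ 1 := by
    rw [norm_smul, Real.norm_of_nonneg hγ0]
    nlinarith [norm_nonneg T1]
  have hconj : Sig + lam • 1 - γ • Sig1 = S * S + lam • 1 - S * (γ • T1) * S := by
    rw [hSsq, hSig1, mul_smul_comm, smul_mul_assoc]
  rw [hconj]
  exact ContinuousLinearMap.exists_inverse_opNorm_le_of_coercive hlam
    (ContinuousLinearMap.coercive_mul_self_add_smul_one_sub_conj hSsa.isSymmetric hγT1 lam)

/-- Lemma: invertibility of the regularized TD operator: with `Σ` positive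
self-adjoint with square root `S = Σ^{1/2}`, `Σ₁ = Σ^{1/2} Σ̃₁ Σ^{1/2}` where `‖Σ̃₁‖ ≤ 1`,
and `γ ∈ [0,1)`, for every `λ > 0` the operator `Σ + λI - γΣ₁` is bijective with bounded
inverse of operator norm at most `1/λ`. -/
theorem regularized_td_operator_invertible
    {H : Type*} [NormedAddCommGroup H] [InnerProductSpace ℝ H] [CompleteSpace H]
    (Sig S T1 Sig1 : H →L[ℝ] H)
    (hSigSA : IsSelfAdjoint Sig) (hSigPos : ∀ f : H, 0 ≤ ⟪f, Sig f⟫_ℝ)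
    (hSsa : IsSelfAdjoint S) (hSpos : ∀ f : H, 0 ≤ ⟪f, S f⟫_ℝ) (hSsq : S * S = Sig)
    (hT1 : ‖T1‖ ≤ 1) (hSig1 : Sig1 = S * T1 * S)
    (γ : ℝ) (hγ0 : 0 ≤ γ) (hγ1 : γ < 1) (b : H)
    (lam : ℝ) (hlam : 0 < lam) :
    ∃ T : H →L[ℝ] H,
      (Sig + lam • 1 - γ • Sig1) * T = 1 ∧
      T * (Sig + lam • 1 - γ • Sig1) = 1 ∧
      ‖T‖ ≤ 1 / lam :=
  regularized_td_operator_invertible_general Sig S T1 Sig1 hSsa hSsq hT1 hSig1 γ hγ0 hγ1 lam hlam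
end

section
/- For every λ > 0, the regularized fixed-point equation b + (γΣ₁ − Σ − λI)V = 0 has a unique solution V*_λ ∈ H, namely V*_λ = (Σ + λI − γΣ₁)^{-1} b, and this solution satisfies ‖V*_λ‖ ≤ ‖b‖ / λ. -/
open scoped InnerProductSpace

/-- Prop. 3: for every `λ > 0`, the regularized fixed-point equation
`b + (γΣ₁ - Σ - λI)V = 0` has a unique solution `V*_λ`, namely
`V*_λ = (Σ + λI - γΣ₁)⁻¹ b`, and `‖V*_λ‖ ≤ ‖b‖/λ`. -/
theorem regularized_fixed_point_exists_unique
    {H : Type*} [NormedAddCommGroup H] [InnerProductSpace ℝ H] [CompleteSpace H]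
    (Sig S T1 Sig1 : H →L[ℝ] H)
    (hSigSA : IsSelfAdjoint Sig) (hSigPos : ∀ f : H, 0 ≤ ⟪f, Sig f⟫_ℝ)
    (hSsa : IsSelfAdjoint S) (hSpos : ∀ f : H, 0 ≤ ⟪f, S f⟫_ℝ) (hSsq : S * S = Sig)
    (hT1 : ‖T1‖ ≤ 1) (hSig1 : Sig1 = S * T1 * S)
    (γ : ℝ) (hγ0 : 0 ≤ γ) (hγ1 : γ < 1) (b : H)
    (lam : ℝ) (hlam : 0 < lam) :
    (∃! V : H, b + (γ • Sig1 - Sig - lam • 1) V = 0) ∧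
    ∀ V : H, b + (γ • Sig1 - Sig - lam • 1) V = 0 →
      ‖V‖ ≤ ‖b‖ / lam ∧
      ∀ T : H →L[ℝ] H, (Sig + lam • 1 - γ • Sig1) * T = 1 →
        T * (Sig + lam • 1 - γ • Sig1) = 1 → V = T b := by
  set A : H →L[ℝ] H := Sig + lam • 1 - γ • Sig1 with hA
  have hneg : γ • Sig1 - Sig - lam • (1 : H →L[ℝ] H) = -A := by
    rw [hA]; module
  have hSym : ∀ x y : H, ⟪S x, y⟫_ℝ = ⟪x, S y⟫_ℝ := fun x y => hSsa.isSymmetric x y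
  -- key coercivity bound
  have hkey : ∀ v : H, lam * ‖v‖ * ‖v‖ ≤ ⟪A v, v⟫_ℝ := by
    intro v
    have hAv : A v = Sig v + lam • v - γ • Sig1 v := by
      simp [hA, ContinuousLinearMap.sub_apply, ContinuousLinearMap.add_apply,
        ContinuousLinearMap.smul_apply]
    have h1 : ⟪Sig v, v⟫_ℝ = ⟪S v, S v⟫_ℝ := by
      rw [← hSsq, ContinuousLinearMap.mul_apply, hSym]
    have h2 : ⟪Sig1 v, v⟫_ℝ = ⟪T1 (S v), S v⟫_ℝ := by
      rw [hSig1]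
      simp only [ContinuousLinearMap.mul_apply]
      rw [hSym]
    have hbound : ⟪T1 (S v), S v⟫_ℝ ≤ ‖S v‖ * ‖S v‖ := by
      calc ⟪T1 (S v), S v⟫_ℝ ≤ ‖T1 (S v)‖ * ‖S v‖ := real_inner_le_norm _ _
        _ ≤ (‖T1‖ * ‖S v‖) * ‖S v‖ := by
            gcongr; exact T1.le_opNorm _
        _ ≤ (1 * ‖S v‖) * ‖S v‖ := by gcongr
        _ = ‖S v‖ * ‖S v‖ := by ring
    have hγb : γ * ⟪T1 (S v), S v⟫_ℝ ≤ ‖S v‖ * ‖S v‖ := by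
      calc γ * ⟪T1 (S v), S v⟫_ℝ ≤ γ * (‖S v‖ * ‖S v‖) := by
            exact mul_le_mul_of_nonneg_left hbound hγ0
        _ ≤ 1 * (‖S v‖ * ‖S v‖) := by
            apply mul_le_mul_of_nonneg_right hγ1.le (by positivity)
        _ = ‖S v‖ * ‖S v‖ := one_mul _
    have : ⟪A v, v⟫_ℝ = ⟪S v, S v⟫_ℝ + lam * ⟪v, v⟫_ℝ - γ * ⟪T1 (S v), S v⟫_ℝ := by
      rw [hAv, inner_sub_left, inner_add_left, real_inner_smul_left, real_inner_smul_left,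
        h1, h2]
    rw [this, real_inner_self_eq_norm_mul_norm]
    have hSv : (0:ℝ) ≤ ⟪S v, S v⟫_ℝ := real_inner_self_nonneg
    rw [real_inner_self_eq_norm_mul_norm] at hSv ⊢
    nlinarith [hγb]
  -- the bilinear form and its coercivity
  set B : H →L[ℝ] H →L[ℝ] ℝ := (innerSL ℝ).comp A with hB
  have hBapp : ∀ v w : H, B v w = ⟪A v, w⟫_ℝ := fun v w => rfl
  have hcoer : IsCoercive B := ⟨lam, hlam, fun u => by rw [hBapp]; exact hkey u⟩
  set e := hcoer.continuousLinearEquivOfBilin with he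
  have hAe : ∀ v : H, A v = e v := by
    intro v
    apply ext_inner_right ℝ
    intro w
    rw [hcoer.continuousLinearEquivOfBilin_apply v w, hBapp]
  have hinj : Function.Injective A := by
    intro x y hxy
    have : e x = e y := by rw [← hAe, ← hAe, hxy]
    exact e.injective this
  have hsol : ∀ V : H, (b + (γ • Sig1 - Sig - lam • 1) V = 0) ↔ A V = b := by
    intro V
    rw [hneg]
    constructor
    · intro h
      have := congrArg (fun x => x + A V) h
      simpa [ContinuousLinearMap.neg_apply, add_assoc] using this.symm
    · intro h
      simp [ContinuousLinearMap.neg_apply, h]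
  constructor
  · refine ⟨e.symm b, ?_, ?_⟩
    · exact (hsol _).mpr (by rw [hAe]; simp)
    · intro y hy
      rw [hsol] at hy
      have : A (e.symm b) = b := by rw [hAe]; simp
      exact hinj (hy.trans this.symm)
  · intro V hV
    rw [hsol] at hV
    constructor
    · rcases eq_or_ne V 0 with rfl | hV0
      · simp; positivity
      · have h1 : lam * ‖V‖ * ‖V‖ ≤ ⟪b, V⟫_ℝ := by rw [← hV]; exact hkey V
        have h2 : ⟪b, V⟫_ℝ ≤ ‖b‖ * ‖V‖ := real_inner_le_norm _ _
        have hVpos : 0 < ‖V‖ := norm_pos_iff.mpr hV0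
        rw [le_div_iff₀ hlam]
        nlinarith
    · intro T _ hTA
      have := congrArg (fun f : H →L[ℝ] H => f V) hTA
      simp only [ContinuousLinearMap.mul_apply, ContinuousLinearMap.one_apply] at this
      rw [hV] at this
      exact this.symm
end

section
/- Let λ > 0 and V*_λ := (Σ + λI − γΣ₁)^{-1} b. Assume V* ∈ H satisfies the unregularized fixed-point equation b + (γΣ₁ − Σ)V* = 0, and assume the source condition: there exist θ ∈ [0,1] and W ∈ H with V* = Σ^{θ/2} W, where Σ^{θ/2} is obtained by applying the continuous functional calculus of Σ to the function t ↦ t^{θ/2}. Then ‖Σ^{1/2}(V*_λ − V*)‖ ≤ (λ^{(1+θ)/2} / (1 − γ)) · ‖W‖. -/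
/-!
Write `D = V*_λ - V*`. Subtracting the two fixed-point equations gives
`(Σ + λ - γΣ₁) D = -λ V*`; pairing with `D` and using `‖Σ̃₁‖ ≤ 1` yields the energy estimate
`(1 - γ)‖Σ^{1/2} D‖² + λ‖D‖² ≤ -λ⟪D, V*⟫ = -λ⟪Σ^{θ/2} D, W⟫`. Concavity of `t ↦ t^θ`
(its tangent lines lie above it) gives the interpolation inequality
`‖Σ^{θ/2} D‖² ≤ θμ^{θ-1}‖Σ^{1/2} D‖² + (1 - θ)μ^θ‖D‖²` for every `μ > 0`; at `μ = λ/(1 - γ)`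
the two estimates combine to `‖Σ^{1/2} D‖ ≤ (λ/(1 - γ))^{(1+θ)/2}‖W‖`.

Since `φ` is only a star-algebra homomorphism with `φ id = Σ`, the functional-calculus
inequalities come from positivity alone: `φ` sends nonnegative functions to positive operators
(they are squares), and, because `Σ ≥ 0`, it kills functions vanishing on `[-ε, ∞)`. This
replaces "the spectrum of `Σ` lies in `[0, ∞)`", which matters because `t ^ (θ/2)` is a junk
value for `t < 0`.
-/

open scoped InnerProductSpace
open Set Filter Topology

lemma le_of_forall_pos_le_add_mul {a b c : ℝ} (h : ∀ ε > 0, a ≤ b + c * ε) : a ≤ b := by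
  have hlim : Tendsto (fun ε => b + c * ε) (𝓝[>] 0) (𝓝 b) := by
    refine tendsto_nhdsWithin_of_tendsto_nhds ?_
    simpa using (tendsto_const_nhds (x := b)).add ((tendsto_id (x := 𝓝 (0 : ℝ))).const_mul c)
  exact ge_of_tendsto hlim (eventually_nhdsWithin_of_forall h)

namespace Real

lemma rpow_le_tangent {x μ θ : ℝ} (hx : 0 ≤ x) (hμ : 0 < μ) (hθ0 : 0 ≤ θ) (hθ1 : θ ≤ 1) :
    x ^ θ ≤ θ * μ ^ (θ - 1) * x + (1 - θ) * μ ^ θ := by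
  have hB := rpow_one_add_le_one_add_mul_self (s := x / μ - 1) (by
    have := div_nonneg hx hμ.le; linarith) hθ0 hθ1
  rw [add_sub_cancel, div_rpow hx hμ.le, div_le_iff₀ (rpow_pos_of_pos hμ θ)] at hB
  rw [rpow_sub_one hμ.ne']
  calc x ^ θ ≤ (1 + θ * (x / μ - 1)) * μ ^ θ := hB
    _ = θ * (μ ^ θ / μ) * x + (1 - θ) * μ ^ θ := by field_simp; ring

lemma rpow_half_mul_self_le {t μ θ ε : ℝ} (hε : 0 ≤ ε) (ht : -ε ≤ t) (hμ : 0 < μ)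
    (hθ0 : 0 ≤ θ) (hθ1 : θ ≤ 1) :
    t ^ (θ / 2) * t ^ (θ / 2) ≤ θ * μ ^ (θ - 1) * (t + 2 * ε) + (1 - θ) * μ ^ θ := by
  have habs : |t ^ (θ / 2)| ^ 2 ≤ |t| ^ θ := by
    calc |t ^ (θ / 2)| ^ 2 ≤ (|t| ^ (θ / 2)) ^ 2 := by
          gcongr; exact abs_rpow_le_abs_rpow t _
      _ = |t| ^ θ := by rw [← rpow_mul_natCast (abs_nonneg t)]; ring_nf
  have ht' : |t| ≤ t + 2 * ε := by
    rcases le_total 0 t with h | h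
    · rw [abs_of_nonneg h]; linarith
    · rw [abs_of_nonpos h]; linarith
  calc t ^ (θ / 2) * t ^ (θ / 2) = |t ^ (θ / 2)| ^ 2 := by rw [sq_abs, sq]
    _ ≤ |t| ^ θ := habs
    _ ≤ θ * μ ^ (θ - 1) * |t| + (1 - θ) * μ ^ θ := rpow_le_tangent (abs_nonneg t) hμ hθ0 hθ1
    _ ≤ θ * μ ^ (θ - 1) * (t + 2 * ε) + (1 - θ) * μ ^ θ := by gcongr

lemma div_rpow_le_rpow_div {x y p : ℝ} (hx : 0 ≤ x) (hy0 : 0 < y) (hy1 : y ≤ 1) (hp : p ≤ 1) :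
    (x / y) ^ p ≤ x ^ p / y := by
  rw [div_rpow hx hy0.le]
  gcongr
  simpa using rpow_le_rpow_of_exponent_ge hy0 hy1 hp

end Real

lemma le_rpow_mul_of_energy_le {a n B w c θ : ℝ} (hw : 0 ≤ w) (hc : 0 < c)
    (hθ0 : 0 ≤ θ) (hθ1 : θ ≤ 1) (hE : a ^ 2 / c + n ^ 2 ≤ B * w)
    (hI : B ^ 2 ≤ θ * c ^ (θ - 1) * a ^ 2 + (1 - θ) * c ^ θ * n ^ 2) :
    a ≤ c ^ ((1 + θ) / 2) * w := by
  have hcθ : 0 < c ^ θ := Real.rpow_pos_of_pos hc θ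
  have hB : B ≤ c ^ θ * w := by
    have : B ^ 2 ≤ c ^ θ * (B * w) := by
      calc B ^ 2 ≤ c ^ θ * (θ * (a ^ 2 / c) + (1 - θ) * n ^ 2) := by
            rw [Real.rpow_sub_one hc.ne'] at hI; convert hI using 1; ring
        _ ≤ c ^ θ * (a ^ 2 / c + n ^ 2) := by
            gcongr
            · exact mul_le_of_le_one_left (div_nonneg (sq_nonneg a) hc.le) hθ1
            · exact mul_le_of_le_one_left (sq_nonneg n) (by linarith)
        _ ≤ c ^ θ * (B * w) := by gcongr
    nlinarith [mul_nonneg hcθ.le hw]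
  have ha2 : a ^ 2 ≤ (c ^ ((1 + θ) / 2) * w) ^ 2 := by
    have : a ^ 2 / c ≤ c ^ θ * w * w := by nlinarith [sq_nonneg n]
    rw [div_le_iff₀ hc] at this
    rw [mul_pow, ← Real.rpow_mul_natCast hc.le, Nat.cast_ofNat, div_mul_cancel₀ _ two_ne_zero,
      Real.rpow_add hc, Real.rpow_one]
    linarith
  exact le_of_sq_le_sq ha2 (by positivity)

namespace StarAlgHom

variable {H : Type*} [NormedAddCommGroup H] [InnerProductSpace ℝ H] [CompleteSpace H]
variable (φ : C(ℝ, ℝ) →⋆ₐ[ℝ] (H →L[ℝ] H))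

lemma inner_map_apply_comm (f : C(ℝ, ℝ)) (x y : H) : ⟪φ f x, y⟫_ℝ = ⟪x, φ f y⟫_ℝ :=
  (isSelfAdjoint_map φ f).isSymmetric x y

lemma inner_map_mul_self_apply (f : C(ℝ, ℝ)) (x : H) :
    ⟪x, φ (f * f) x⟫_ℝ = ‖φ f x‖ ^ 2 := by
  rw [map_mul, mul_apply_eq_comp, ← inner_map_apply_comm, real_inner_self_eq_norm_sq]

lemma inner_map_apply_nonneg {f : C(ℝ, ℝ)} (hf : 0 ≤ f) (x : H) : 0 ≤ ⟪x, φ f x⟫_ℝ := by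
  let r : C(ℝ, ℝ) := ⟨fun t => √(f t), by fun_prop⟩
  have hr : r * r = f := by ext t; exact Real.mul_self_sqrt (hf t)
  rw [← hr, inner_map_mul_self_apply]
  positivity

variable {φ}

lemma map_eq_zero_of_eqOn_Ici (hA : ∀ x, 0 ≤ ⟪x, φ (ContinuousMap.id ℝ) x⟫_ℝ) {ε : ℝ}
    (hε : 0 < ε) {f : C(ℝ, ℝ)} (hf : EqOn f 0 (Ici (-ε))) : φ f = 0 := by
  ext x
  -- `f t = 0` unless `t < -ε`, so `f * (ε + id) * f ≤ 0`; pairing with `x` then gives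
  -- `ε ‖φ f x‖² + ⟪φ f x, φ id (φ f x)⟫ ≤ 0`.
  have hneg : 0 ≤ -(f * (ε • 1 + ContinuousMap.id ℝ) * f) := fun t => by
    rcases lt_or_ge t (-ε) with ht | ht
    · have : 0 ≤ f t * f t := mul_self_nonneg _
      simp; nlinarith
    · simp [hf ht]
  have h := inner_map_apply_nonneg φ hneg x
  set y := φ f x
  have hy : ⟪x, φ (f * (ε • 1 + ContinuousMap.id ℝ) * f) x⟫_ℝ =
      ε * ‖y‖ ^ 2 + ⟪y, φ (ContinuousMap.id ℝ) y⟫_ℝ := by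
    rw [map_mul, map_mul, mul_apply_eq_comp, mul_apply_eq_comp, ← inner_map_apply_comm, map_add,
      map_smul, map_one, add_apply, smul_apply, one_apply_eq_self, inner_add_right,
      real_inner_smul_right, real_inner_self_eq_norm_sq]
  rw [map_neg, neg_apply, inner_neg_right, hy] at h
  have : ‖y‖ ^ 2 = 0 := by nlinarith [sq_nonneg ‖y‖, hA y]
  simpa using this

lemma inner_map_apply_le_of_le_on_Ici (hA : ∀ x, 0 ≤ ⟪x, φ (ContinuousMap.id ℝ) x⟫_ℝ) {ε : ℝ}
    (hε : 0 < ε) {f g : C(ℝ, ℝ)} (hfg : ∀ t ∈ Ici (-ε), f t ≤ g t) (x : H) :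
    ⟪x, φ f x⟫_ℝ ≤ ⟪x, φ g x⟫_ℝ := by
  have hneg : φ ((g - f) ⊓ 0) = 0 :=
    map_eq_zero_of_eqOn_Ici hA hε fun t ht => by simpa using hfg t ht
  have hpos : 0 ≤ ⟪x, φ ((g - f) ⊓ 0 + (g - f) ⊔ 0) x⟫_ℝ := by
    rw [map_add, hneg, zero_add]
    exact inner_map_apply_nonneg φ le_sup_right x
  rw [inf_add_sup, add_zero, map_sub, sub_apply, inner_sub_right, sub_nonneg] at hpos
  exact hpos

lemma norm_map_rpow_apply_sq_le (hA : ∀ x, 0 ≤ ⟪x, φ (ContinuousMap.id ℝ) x⟫_ℝ) {θ μ : ℝ}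
    (hθ0 : 0 ≤ θ) (hθ1 : θ ≤ 1) (hμ : 0 < μ) {g : C(ℝ, ℝ)} (hg : ∀ t, g t = t ^ (θ / 2))
    (x : H) :
    ‖φ g x‖ ^ 2 ≤
      θ * μ ^ (θ - 1) * ⟪x, φ (ContinuousMap.id ℝ) x⟫_ℝ + (1 - θ) * μ ^ θ * ‖x‖ ^ 2 := by
  -- The slack `2ε` in the tangent line absorbs `t ∈ [-ε, 0)`, where `t ^ (θ / 2)` is junk.
  refine le_of_forall_pos_le_add_mul (c := 2 * θ * μ ^ (θ - 1) * ‖x‖ ^ 2) fun ε hε => ?_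
  let tangent : C(ℝ, ℝ) :=
    (θ * μ ^ (θ - 1)) • (ContinuousMap.id ℝ + (2 * ε) • 1) + ((1 - θ) * μ ^ θ) • 1
  have h := inner_map_apply_le_of_le_on_Ici hA hε (f := g * g) (g := tangent) (fun t ht => by
    simpa [tangent, hg, mul_add] using Real.rpow_half_mul_self_le hε.le ht hμ hθ0 hθ1) x
  rw [inner_map_mul_self_apply] at h
  refine h.trans (le_of_eq ?_)
  simp only [tangent, map_add, map_smul, map_one, add_apply, smul_apply, one_apply_eq_self,
    inner_add_right, real_inner_smul_right, real_inner_self_eq_norm_sq]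
  ring

end StarAlgHom

lemma IsSelfAdjoint.inner_mul_self_apply {H : Type*} [NormedAddCommGroup H]
    [InnerProductSpace ℝ H] [CompleteSpace H] {S : H →L[ℝ] H} (hS : IsSelfAdjoint S) (x : H) :
    ⟪x, (S * S) x⟫_ℝ = ‖S x‖ ^ 2 := by
  rw [mul_apply_eq_comp, ← real_inner_self_eq_norm_sq]
  exact (hS.isSymmetric x (S x)).symm

lemma one_sub_mul_norm_sq_add_mul_norm_sq_le_inner {H : Type*} [NormedAddCommGroup H]
    [InnerProductSpace ℝ H] [CompleteSpace H] {S T : H →L[ℝ] H} (hS : IsSelfAdjoint S)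
    (hT : ‖T‖ ≤ 1) {γ : ℝ} (hγ : 0 ≤ γ) (lam : ℝ) (x : H) :
    (1 - γ) * ‖S x‖ ^ 2 + lam * ‖x‖ ^ 2 ≤ ⟪x, (S * S + lam • 1 - γ • (S * T * S)) x⟫_ℝ := by
  have hT' : ⟪S x, T (S x)⟫_ℝ ≤ ‖S x‖ ^ 2 :=
    calc ⟪S x, T (S x)⟫_ℝ ≤ ‖S x‖ * ‖T (S x)‖ := real_inner_le_norm _ _
      _ ≤ ‖S x‖ * ‖S x‖ := by gcongr; exact (T.le_of_opNorm_le hT _).trans_eq (one_mul _)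
      _ = ‖S x‖ ^ 2 := (sq _).symm
  have hx : ⟪x, (S * S + lam • 1 - γ • (S * T * S)) x⟫_ℝ =
      ‖S x‖ ^ 2 + lam * ‖x‖ ^ 2 - γ * ⟪S x, T (S x)⟫_ℝ := by
    rw [sub_apply, add_apply, smul_apply, smul_apply, one_apply_eq_self, inner_sub_right,
      inner_add_right, hS.inner_mul_self_apply, real_inner_smul_right, real_inner_smul_right,
      real_inner_self_eq_norm_sq, mul_apply_eq_comp, mul_apply_eq_comp]
    congr 2
    exact (hS.isSymmetric x _).symm
  rw [hx]
  nlinarith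

/-- Prop. 4, source condition: let `V*_λ = (Σ + λI - γΣ₁)⁻¹ b` (characterized by
`(Σ + λI - γΣ₁) V*_λ = b`), let `V*` solve the unregularized fixed-point equation
`b + (γΣ₁ - Σ)V* = 0` and satisfy the source condition `V* = Σ^{θ/2} W` for some `θ ∈ [0,1]`
and `W ∈ H`, where `Σ^{θ/2}` is obtained from the continuous functional calculus `φ` of `Σ`
(a continuous star-algebra homomorphism `C(ℝ,ℝ) → B(H)` sending `id` to `Σ`, applied to
`t ↦ t^{θ/2}`).  Then `‖Σ^{1/2}(V*_λ - V*)‖ ≤ λ^{(1+θ)/2}/(1-γ) · ‖W‖`. -/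
theorem regularized_fixed_point_source_condition_rate
    {H : Type*} [NormedAddCommGroup H] [InnerProductSpace ℝ H] [CompleteSpace H]
    (Sig S T1 Sig1 : H →L[ℝ] H)
    (hSigPos : ∀ f : H, 0 ≤ ⟪f, Sig f⟫_ℝ)
    (hSsa : IsSelfAdjoint S) (hSsq : S * S = Sig)
    (hT1 : ‖T1‖ ≤ 1) (hSig1 : Sig1 = S * T1 * S)
    (γ : ℝ) (hγ0 : 0 ≤ γ) (hγ1 : γ < 1) (b : H)
    (φ : C(ℝ, ℝ) →⋆ₐ[ℝ] (H →L[ℝ] H))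
    (hφid : φ (ContinuousMap.id ℝ) = Sig)
    (lam : ℝ) (hlam : 0 < lam)
    (Vlam : H) (hVlam : (Sig + lam • 1 - γ • Sig1) Vlam = b)
    (Vstar : H) (hVstar : b + (γ • Sig1 - Sig) Vstar = 0)
    (θ : ℝ) (hθ0 : 0 ≤ θ) (hθ1 : θ ≤ 1) (W : H)
    (hW : Vstar =
      (φ ⟨fun t : ℝ => t ^ (θ / 2), Real.continuous_rpow_const (by linarith)⟩) W) :
    ‖S (Vlam - Vstar)‖ ≤ lam ^ ((1 + θ) / 2) / (1 - γ) * ‖W‖ := by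
  subst hSig1 hSsq
  set g : C(ℝ, ℝ) := ⟨fun t : ℝ => t ^ (θ / 2), Real.continuous_rpow_const (by linarith)⟩
  set D := Vlam - Vstar
  have hA : ∀ x, 0 ≤ ⟪x, φ (ContinuousMap.id ℝ) x⟫_ℝ := hφid ▸ hSigPos
  have hres : (S * S + lam • 1 - γ • (S * T1 * S)) D = -(lam • Vstar) := by
    rw [map_sub, hVlam]
    simp only [sub_apply, add_apply, smul_apply, one_apply_eq_self] at hVstar ⊢
    linear_combination (norm := module) hVstar
  have hE : (1 - γ) * ‖S D‖ ^ 2 + lam * ‖D‖ ^ 2 ≤ lam * (‖φ g D‖ * ‖W‖) :=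
    calc _ ≤ ⟪D, (S * S + lam • 1 - γ • (S * T1 * S)) D⟫_ℝ :=
          one_sub_mul_norm_sq_add_mul_norm_sq_le_inner hSsa hT1 hγ0 lam D
      _ = -(lam * ⟪φ g D, W⟫_ℝ) := by
          rw [hres, hW, inner_neg_right, real_inner_smul_right, StarAlgHom.inner_map_apply_comm]
      _ ≤ _ := by nlinarith [neg_abs_le ⟪φ g D, W⟫_ℝ, abs_real_inner_le_norm (φ g D) W]
  have hc : 0 < lam / (1 - γ) := div_pos hlam (by linarith)
  have hI := StarAlgHom.norm_map_rpow_apply_sq_le hA hθ0 hθ1 hc (g := g) (fun _ => rfl) D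
  rw [hφid, hSsa.inner_mul_self_apply] at hI
  have hE' : ‖S D‖ ^ 2 / (lam / (1 - γ)) + ‖D‖ ^ 2 ≤ ‖φ g D‖ * ‖W‖ := by
    rw [div_div_eq_mul_div, div_add' _ _ _ hlam.ne', div_le_iff₀ hlam]
    linarith
  calc ‖S D‖ ≤ (lam / (1 - γ)) ^ ((1 + θ) / 2) * ‖W‖ :=
        le_rpow_mul_of_energy_le (norm_nonneg W) hc hθ0 hθ1 hE' hI
    _ ≤ lam ^ ((1 + θ) / 2) / (1 - γ) * ‖W‖ := by
        gcongr
        exact Real.div_rpow_le_rpow_div hlam.le (by linarith) (by linarith) (by linarith)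
end

section
/- Assume V* ∈ H satisfies the unregularized fixed-point equation b + (γΣ₁ − Σ)V* = 0. For every λ > 0, letting V*_λ := (Σ + λI − γΣ₁)^{-1} b, one has ‖Σ^{1/2}(V*_λ − V*)‖ ≤ ‖Σ^{1/2} V*‖ / (1 − γ). -/
open scoped InnerProductSpace

private lemma scalar_step (γ lam n G t M : ℝ) (hγ0 : 0 ≤ γ) (hγ1 : γ < 1) (hlam : 0 < lam)
    (hn : 0 ≤ n) (hG : 0 ≤ G) (hM : 0 ≤ M)
    (hM2 : M^2 = G^2 - 2*lam*t + lam^2*n^2)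
    (ht : t ≤ n*G)
    (key : lam*n^2 - t ≤ γ*n*M) :
    (1-γ)*lam*n ≤ G := by
  rcases eq_or_lt_of_le hn with hn0 | hn0
  · rw [← hn0]; simpa using hG
  rcases le_or_gt (lam*n^2 - t) 0 with hX | hX
  · have h1 : n*(lam*n) ≤ n*G := by nlinarith
    have h2 : lam*n ≤ G := le_of_mul_le_mul_left h1 hn0
    nlinarith [mul_nonneg (mul_nonneg hγ0 hlam.le) hn0.le]
  · have k2 := mul_self_le_mul_self hX.le key
    have k3 : (lam*n^2 - t)*(lam*n^2 - t) ≤ γ^2*n^2*(G^2 - 2*lam*t + lam^2*n^2) := by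
      calc (lam*n^2 - t)*(lam*n^2 - t) ≤ (γ*n*M)*(γ*n*M) := k2
        _ = γ^2*n^2*M^2 := by ring
        _ = γ^2*n^2*(G^2 - 2*lam*t + lam^2*n^2) := by rw [hM2]
    have hdisc : 0 ≤ γ^2*n^2*(G^2 - (1-γ^2)*lam^2*n^2) := by
      nlinarith [sq_nonneg (lam*n^2 - t - γ^2*n^2*lam), k3]
    have hγn : 0 < γ*n := by
      by_contra h
      push_neg at h
      nlinarith [mul_nonneg (mul_nonneg hγ0 hn) hM]
    have hG2 : (1-γ^2)*lam^2*n^2 ≤ G^2 := by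
      have h1 : 0 < γ^2*n^2 := by nlinarith
      nlinarith [hdisc]
    nlinarith [sq_nonneg (G - (1-γ)*lam*n), sq_nonneg (G + (1-γ)*lam*n),
      mul_nonneg (mul_nonneg (sub_nonneg.2 hγ1.le) hlam.le) hn]

private lemma core_resolvent_bound {H : Type*} [NormedAddCommGroup H] [InnerProductSpace ℝ H]
    (S T : H →L[ℝ] H) (hSsym : ∀ x z : H, ⟪S x, z⟫_ℝ = ⟪x, S z⟫_ℝ)
    (hT : ‖T‖ ≤ 1) (γ lam : ℝ) (hγ0 : 0 ≤ γ) (hγ1 : γ < 1) (hlam : 0 < lam)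
    (y g : H) (hg : S (S (y - γ • T y)) + lam • y = g) :
    (1-γ)*lam*‖y‖ ≤ ‖g‖ := by
  set v := y - γ • T y with hv
  set w := g - lam • y with hw
  have hSSv : S (S v) = w := by rw [hw, ← hg]; abel
  -- p = ⟪v, w⟫ ≥ 0
  have hp : 0 ≤ ⟪v, w⟫_ℝ := by
    rw [← hSSv, ← hSsym]
    exact real_inner_self_nonneg
  -- y - v = γ • T y
  have hyv : y - v = γ • T y := by rw [hv]; abel
  have hsp : ⟪y, w⟫_ℝ - ⟪v, w⟫_ℝ = γ * ⟪T y, w⟫_ℝ := by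
    rw [← inner_sub_left, hyv, real_inner_smul_left]
  have hTy : ‖T y‖ ≤ ‖y‖ := by
    calc ‖T y‖ ≤ ‖T‖ * ‖y‖ := T.le_opNorm y
      _ ≤ 1 * ‖y‖ := by nlinarith [norm_nonneg y]
      _ = ‖y‖ := one_mul _
  have hinner : -(‖y‖ * ‖w‖) ≤ ⟪T y, w⟫_ℝ := by
    have h1 := abs_real_inner_le_norm (T y) w
    have h2 : (0:ℝ) ≤ ‖w‖ := norm_nonneg w
    nlinarith [abs_nonneg ⟪T y, w⟫_ℝ, neg_abs_le ⟪T y, w⟫_ℝ]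
  -- s = ⟪y, w⟫ = ⟪y,g⟫ - lam‖y‖²
  have hs : ⟪y, w⟫_ℝ = ⟪y, g⟫_ℝ - lam * ‖y‖^2 := by
    rw [hw, inner_sub_right, real_inner_smul_right, real_inner_self_eq_norm_sq]
  have key : lam*‖y‖^2 - ⟪y, g⟫_ℝ ≤ γ*‖y‖*‖w‖ := by
    have h3 : ⟪y, w⟫_ℝ = ⟪v, w⟫_ℝ + γ * ⟪T y, w⟫_ℝ := by linarith [hsp]
    have h4 : -(γ * (‖y‖ * ‖w‖)) ≤ γ * ⟪T y, w⟫_ℝ := by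
      have := mul_le_mul_of_nonneg_left hinner hγ0
      linarith
    nlinarith [hp, hs, h4, h3]
  have hM2 : ‖w‖^2 = ‖g‖^2 - 2*lam*⟪y, g⟫_ℝ + lam^2*‖y‖^2 := by
    rw [hw, norm_sub_sq_real, real_inner_smul_right, norm_smul, real_inner_comm]
    rw [Real.norm_eq_abs, abs_of_pos hlam]
    ring
  exact scalar_step γ lam ‖y‖ ‖g‖ ⟪y, g⟫_ℝ ‖w‖ hγ0 hγ1 hlam (norm_nonneg y)
    (norm_nonneg g) (norm_nonneg w) hM2 (real_inner_le_norm y g) key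

/-- if `V*` solves the unregularized fixed-point equation `b + (γΣ₁ - Σ)V* = 0`,
then for every `λ > 0`, with `V*_λ = (Σ + λI - γΣ₁)⁻¹ b` (characterized by
`(Σ + λI - γΣ₁) V*_λ = b`), one has `‖Σ^{1/2}(V*_λ - V*)‖ ≤ ‖Σ^{1/2} V*‖ / (1 - γ)`. -/
theorem regularized_fixed_point_uniform_bound
    {H : Type*} [NormedAddCommGroup H] [InnerProductSpace ℝ H] [CompleteSpace H]
    (Sig S T1 Sig1 : H →L[ℝ] H)
    (hSigSA : IsSelfAdjoint Sig) (hSigPos : ∀ f : H, 0 ≤ ⟪f, Sig f⟫_ℝ)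
    (hSsa : IsSelfAdjoint S) (hSpos : ∀ f : H, 0 ≤ ⟪f, S f⟫_ℝ) (hSsq : S * S = Sig)
    (hT1 : ‖T1‖ ≤ 1) (hSig1 : Sig1 = S * T1 * S)
    (γ : ℝ) (hγ0 : 0 ≤ γ) (hγ1 : γ < 1) (b : H)
    (Vstar : H) (hVstar : b + (γ • Sig1 - Sig) Vstar = 0)
    (lam : ℝ) (hlam : 0 < lam)
    (Vlam : H) (hVlam : (Sig + lam • 1 - γ • Sig1) Vlam = b) :
    ‖S (Vlam - Vstar)‖ ≤ ‖S Vstar‖ / (1 - γ) := by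
  have hSsym : ∀ x z : H, ⟪S x, z⟫_ℝ = ⟪x, S z⟫_ℝ :=
    fun x z => (ContinuousLinearMap.isSelfAdjoint_iff_isSymmetric.mp hSsa) x z
  have e1 : Sig Vlam + lam • Vlam - γ • Sig1 Vlam = b := by
    simpa [ContinuousLinearMap.add_apply, ContinuousLinearMap.sub_apply,
      ContinuousLinearMap.smul_apply, ContinuousLinearMap.one_apply] using hVlam
  have e2 : γ • Sig1 Vstar - Sig Vstar = -b := by
    have := eq_neg_of_add_eq_zero_right hVstar
    simpa [ContinuousLinearMap.sub_apply, ContinuousLinearMap.smul_apply] using this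
  have e3 : Sig (Vlam - Vstar) - γ • Sig1 (Vlam - Vstar) + lam • (Vlam - Vstar)
      = -(lam • Vstar) := by
    rw [map_sub, map_sub]
    calc Sig Vlam - Sig Vstar - γ • (Sig1 Vlam - Sig1 Vstar) + lam • (Vlam - Vstar)
        = (Sig Vlam + lam • Vlam - γ • Sig1 Vlam) + (γ • Sig1 Vstar - Sig Vstar)
          - lam • Vstar := by rw [smul_sub, smul_sub]; abel
      _ = b + -b - lam • Vstar := by rw [e1, e2]
      _ = -(lam • Vstar) := by abel
  have hSig : Sig (Vlam - Vstar) = S (S (Vlam - Vstar)) := by rw [← hSsq]; rfl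
  have hSig1' : Sig1 (Vlam - Vstar) = S (T1 (S (Vlam - Vstar))) := by rw [hSig1]; rfl
  have e6 : S (S (S (Vlam - Vstar) - γ • T1 (S (Vlam - Vstar)))) + lam • (S (Vlam - Vstar))
      = -(lam • S Vstar) := by
    rw [hSig, hSig1'] at e3
    have h := congrArg S e3
    simp only [map_sub, map_add, map_smul, map_neg, smul_sub] at h ⊢
    abel_nf at h ⊢
    exact h
  have hcore := core_resolvent_bound S T1 hSsym hT1 γ lam hγ0 hγ1 hlam (S (Vlam - Vstar)) _ e6
  have hnorm : ‖-(lam • S Vstar)‖ = lam * ‖S Vstar‖ := by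
    rw [norm_neg, norm_smul, Real.norm_eq_abs, abs_of_pos hlam]
  rw [hnorm] at hcore
  have h7 : lam * ((1-γ)*‖S (Vlam - Vstar)‖) ≤ lam * ‖S Vstar‖ := by nlinarith [hcore]
  have h8 := le_of_mul_le_mul_left h7 hlam
  rw [le_div_iff₀ (by linarith : (0:ℝ) < 1 - γ)]
  linarith
end

section
/- Let λ ≥ 0 and suppose V*_λ ∈ H satisfies b + (γΣ₁ − Σ − λI)V*_λ = 0. Then for every V ∈ H, ⟨V − V*_λ, (γΣ₁ − Σ − λI)V + b⟩ ≤ −(1 − γ)·‖Σ^{1/2}(V − V*_λ)‖² − λ·‖V − V*_λ‖². -/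
open scoped InnerProductSpace

/-- key inequality of the Descent Lemma: if `λ ≥ 0` and `V*_λ` satisfies
`b + (γΣ₁ - Σ - λI)V*_λ = 0`, then for every `V ∈ H`,
`⟪V - V*_λ, (γΣ₁ - Σ - λI)V + b⟫ ≤ -(1-γ)‖Σ^{1/2}(V - V*_λ)‖² - λ‖V - V*_λ‖²`. -/
theorem td_descent_inner_bound
    {H : Type*} [NormedAddCommGroup H] [InnerProductSpace ℝ H] [CompleteSpace H]
    (Sig S T1 Sig1 : H →L[ℝ] H)
    (hSigSA : IsSelfAdjoint Sig) (hSigPos : ∀ f : H, 0 ≤ ⟪f, Sig f⟫_ℝ)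
    (hSsa : IsSelfAdjoint S) (hSpos : ∀ f : H, 0 ≤ ⟪f, S f⟫_ℝ) (hSsq : S * S = Sig)
    (hT1 : ‖T1‖ ≤ 1) (hSig1 : Sig1 = S * T1 * S)
    (γ : ℝ) (hγ0 : 0 ≤ γ) (hγ1 : γ < 1) (b : H)
    (lam : ℝ) (hlam : 0 ≤ lam)
    (Vlam : H) (hVlam : b + (γ • Sig1 - Sig - lam • 1) Vlam = 0)
    (V : H) :
    ⟪V - Vlam, (γ • Sig1 - Sig - lam • 1) V + b⟫_ℝ ≤
      -(1 - γ) * ‖S (V - Vlam)‖ ^ 2 - lam * ‖V - Vlam‖ ^ 2 := by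
  set A := γ • Sig1 - Sig - lam • 1 with hA
  set d := V - Vlam with hd
  have hrw : A V + b = A d := by
    have : A d = A V - A Vlam := by simp [hd, map_sub]
    rw [this]
    have hb : b = - A Vlam := by linear_combination (norm := abel) hVlam
    rw [hb]; abel
  rw [hrw]
  have hAd : ⟪d, A d⟫_ℝ = γ * ⟪d, Sig1 d⟫_ℝ - ⟪d, Sig d⟫_ℝ - lam * ⟪d, d⟫_ℝ := by
    simp [hA, inner_sub_right, inner_smul_right, ContinuousLinearMap.sub_apply,
      ContinuousLinearMap.smul_apply, ContinuousLinearMap.one_apply]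
  have hsym := hSsa.isSymmetric
  have hSig1d : ⟪d, Sig1 d⟫_ℝ = ⟪S d, T1 (S d)⟫_ℝ := by
    rw [hSig1]
    simpa using (hsym d (T1 (S d))).symm
  have hSigd : ⟪d, Sig d⟫_ℝ = ‖S d‖ ^ 2 := by
    rw [← hSsq]
    have : ⟪S d, S d⟫_ℝ = ⟪d, S (S d)⟫_ℝ := hsym d (S d)
    simp only [ContinuousLinearMap.mul_apply]
    rw [← this, real_inner_self_eq_norm_sq]
  have hbound : ⟪S d, T1 (S d)⟫_ℝ ≤ ‖S d‖ ^ 2 := by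
    calc ⟪S d, T1 (S d)⟫_ℝ ≤ ‖S d‖ * ‖T1 (S d)‖ := real_inner_le_norm _ _
    _ ≤ ‖S d‖ * (1 * ‖S d‖) := by
        gcongr
        exact T1.le_of_opNorm_le hT1 _
    _ = ‖S d‖ ^ 2 := by ring
  rw [hAd, hSig1d, hSigd, real_inner_self_eq_norm_sq]
  nlinarith [norm_nonneg (S d), norm_nonneg d]
end

section
/- Let λ > 0 and V*_λ := (Σ + λI − γΣ₁)^{-1} b. Let V : ℝ → H be differentiable with V′(t) = (γΣ₁ − Σ − λI)V(t) + b for all t ≥ 0, and define W(t) := ‖V(t) − V*_λ‖². Then W is differentiable and for all t ≥ 0, W′(t) ≤ −2(1 − γ)·‖Σ^{1/2}(V(t) − V*_λ)‖² − 2λ·W(t). -/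
/-! With `E(t) = V(t) - V*_λ` the ODE becomes linear, `E' = A E` with `A = γΣ₁ - Σ - λI`, so
`W' = 2⟪E, A E⟫`. Writing `Σ = S²` and `Σ₁ = S T₁ S` with `S` symmetric turns the quadratic form
into `γ⟪SE, T₁ SE⟫ - ‖SE‖² - λ‖E‖²`, and `‖T₁‖ ≤ 1` bounds the first term by `γ‖SE‖²`. -/

open scoped InnerProductSpace

section

variable {H : Type*} [NormedAddCommGroup H] [InnerProductSpace ℝ H]

theorem LinearMap.IsSymmetric.real_inner_mul_mul_apply_self {S : H →L[ℝ] H}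
    (hS : (S : H →ₗ[ℝ] H).IsSymmetric) (T : H →L[ℝ] H) (x : H) :
    ⟪x, (S * T * S) x⟫_ℝ = ⟪S x, T (S x)⟫_ℝ :=
  (hS x (T (S x))).symm

theorem LinearMap.IsSymmetric.real_inner_mul_self_apply_self {S : H →L[ℝ] H}
    (hS : (S : H →ₗ[ℝ] H).IsSymmetric) (x : H) :
    ⟪x, (S * S) x⟫_ℝ = ‖S x‖ ^ 2 := by
  simpa [real_inner_self_eq_norm_sq] using hS.real_inner_mul_mul_apply_self 1 x

theorem ContinuousLinearMap.real_inner_apply_self_le_of_norm_le_one {T : H →L[ℝ] H}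
    (hT : ‖T‖ ≤ 1) (x : H) : ⟪x, T x⟫_ℝ ≤ ‖x‖ ^ 2 :=
  calc ⟪x, T x⟫_ℝ ≤ ‖x‖ * ‖T x‖ := real_inner_le_norm _ _
    _ ≤ ‖x‖ * (1 * ‖x‖) := by gcongr; exact T.le_of_opNorm_le hT x
    _ = ‖x‖ ^ 2 := by ring

theorem real_inner_drift_apply_self_le {S T : H →L[ℝ] H}
    (hS : (S : H →ₗ[ℝ] H).IsSymmetric) (hT : ‖T‖ ≤ 1) {γ : ℝ} (hγ : 0 ≤ γ) (lam : ℝ) (x : H) :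
    ⟪x, (γ • (S * T * S) - S * S - lam • 1) x⟫_ℝ ≤
      -(1 - γ) * ‖S x‖ ^ 2 - lam * ‖x‖ ^ 2 := by
  have hT' := T.real_inner_apply_self_le_of_norm_le_one hT (S x)
  simp only [sub_apply, smul_apply, one_apply_eq_self, inner_sub_right, inner_smul_right,
    real_inner_self_eq_norm_sq, hS.real_inner_mul_mul_apply_self,
    hS.real_inner_mul_self_apply_self]
  linarith [mul_le_mul_of_nonneg_left hT' hγ]

theorem HasDerivAt.norm_sub_equilibrium_sq {A : H →L[ℝ] H} {b v : H} (hv : A v + b = 0)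
    {V : ℝ → H} {t : ℝ} (hV : HasDerivAt V (A (V t) + b) t) :
    HasDerivAt (fun s => ‖V s - v‖ ^ 2) (2 * ⟪V t - v, A (V t - v)⟫_ℝ) t := by
  have hE : HasDerivAt (fun s => V s - v) (A (V t - v)) t := by
    convert hV.sub_const v using 1
    rw [map_sub, eq_neg_of_add_eq_zero_left hv, sub_neg_eq_add]
  exact hE.norm_sq

end

theorem td_ode_descent_lemma_general
    {H : Type*} [NormedAddCommGroup H] [InnerProductSpace ℝ H] [CompleteSpace H]
    (Sig S T1 Sig1 : H →L[ℝ] H)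
    (hSsa : IsSelfAdjoint S) (hSsq : S * S = Sig)
    (hT1 : ‖T1‖ ≤ 1) (hSig1 : Sig1 = S * T1 * S)
    (γ : ℝ) (hγ0 : 0 ≤ γ) (b : H)
    (lam : ℝ)
    (Vlam : H) (hVlam : (Sig + lam • 1 - γ • Sig1) Vlam = b)
    (V : ℝ → H) (hVdiff : Differentiable ℝ V)
    (hODE : ∀ t : ℝ, 0 ≤ t → HasDerivAt V ((γ • Sig1 - Sig - lam • 1) (V t) + b) t) :
    Differentiable ℝ (fun t : ℝ => ‖V t - Vlam‖ ^ 2) ∧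
    ∀ t : ℝ, 0 ≤ t →
      deriv (fun s : ℝ => ‖V s - Vlam‖ ^ 2) t ≤
        -2 * (1 - γ) * ‖S (V t - Vlam)‖ ^ 2 - 2 * lam * ‖V t - Vlam‖ ^ 2 := by
  subst hSig1 hSsq
  have hequil : (γ • (S * T1 * S) - S * S - lam • 1) Vlam + b = 0 := by
    rw [← hVlam]
    simp only [sub_apply, add_apply]
    abel
  refine ⟨(hVdiff.sub_const Vlam).norm_sq ℝ, fun t ht => ?_⟩
  rw [((hODE t ht).norm_sub_equilibrium_sq hequil).deriv]
  linarith [real_inner_drift_apply_self_le hSsa.isSymmetric hT1 hγ0 lam (V t - Vlam)]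

/-- Descent Lemma, continuous time: let `λ > 0`,
`V*_λ = (Σ + λI - γΣ₁)⁻¹ b` (characterized by `(Σ + λI - γΣ₁) V*_λ = b`), and let
`V : ℝ → H` be differentiable with `V'(t) = (γΣ₁ - Σ - λI)V(t) + b` for all `t ≥ 0`.
Then `W(t) = ‖V(t) - V*_λ‖²` is differentiable and for all `t ≥ 0`,
`W'(t) ≤ -2(1-γ)‖Σ^{1/2}(V(t) - V*_λ)‖² - 2λ W(t)`. -/
theorem td_ode_descent_lemma
    {H : Type*} [NormedAddCommGroup H] [InnerProductSpace ℝ H] [CompleteSpace H]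
    (Sig S T1 Sig1 : H →L[ℝ] H)
    (hSigSA : IsSelfAdjoint Sig) (hSigPos : ∀ f : H, 0 ≤ ⟪f, Sig f⟫_ℝ)
    (hSsa : IsSelfAdjoint S) (hSpos : ∀ f : H, 0 ≤ ⟪f, S f⟫_ℝ) (hSsq : S * S = Sig)
    (hT1 : ‖T1‖ ≤ 1) (hSig1 : Sig1 = S * T1 * S)
    (γ : ℝ) (hγ0 : 0 ≤ γ) (hγ1 : γ < 1) (b : H)
    (lam : ℝ) (hlam : 0 < lam)
    (Vlam : H) (hVlam : (Sig + lam • 1 - γ • Sig1) Vlam = b)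
    (V : ℝ → H) (hVdiff : Differentiable ℝ V)
    (hODE : ∀ t : ℝ, 0 ≤ t → HasDerivAt V ((γ • Sig1 - Sig - lam • 1) (V t) + b) t) :
    Differentiable ℝ (fun t : ℝ => ‖V t - Vlam‖ ^ 2) ∧
    ∀ t : ℝ, 0 ≤ t →
      deriv (fun s : ℝ => ‖V s - Vlam‖ ^ 2) t ≤
        -2 * (1 - γ) * ‖S (V t - Vlam)‖ ^ 2 - 2 * lam * ‖V t - Vlam‖ ^ 2 :=
  td_ode_descent_lemma_general Sig S T1 Sig1 hSsa hSsq hT1 hSig1 γ hγ0 b lam Vlam hVlam V hVdiff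
    hODE
end

section
/- Assume V* ∈ H satisfies b + (γΣ₁ − Σ)V* = 0. Let V : ℝ → H be differentiable with V(0) = 0 and V′(t) = (γΣ₁ − Σ)V(t) + b for all t ≥ 0. Then for every T > 0, the Polyak–Ruppert average V̄_T := (1/T) ∫₀^T V(t) dt satisfies ‖Σ^{1/2}(V̄_T − V*)‖² ≤ ‖V*‖² / (2(1 − γ)T). -/
open scoped InnerProductSpace
open MeasureTheory (volume)
open Set intervalIntegral

/-!
The error `W = V - V*` solves `W' = A W` with `A = γΣ₁ - Σ`, and `A` is dissipative:
`⟪w, A w⟫ ≤ -(1 - γ)‖Σ^{1/2} w‖²` because `‖Σ̃₁‖ ≤ 1`. Hence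
`d/dt ‖W‖² ≤ -2(1 - γ)‖Σ^{1/2} W‖²`, and integrating over `[0, T]` gives
`∫₀ᵀ ‖Σ^{1/2} W‖² ≤ ‖V*‖² / (2(1 - γ))`. Jensen's inequality for the convex function `‖·‖²`
bounds `‖Σ^{1/2}(V̄_T - V*)‖²`, the squared norm of the average of `Σ^{1/2} W`, by
`T⁻¹ ∫₀ᵀ ‖Σ^{1/2} W‖²`.
-/

theorem IsSelfAdjoint.real_inner_smul_conj_sub_mul_self_le {H : Type*}
    [NormedAddCommGroup H] [InnerProductSpace ℝ H] [CompleteSpace H] {S T₁ : H →L[ℝ] H}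
    (hS : IsSelfAdjoint S) (hT₁ : ‖T₁‖ ≤ 1) {γ : ℝ} (hγ : 0 ≤ γ) (w : H) :
    ⟪w, (γ • (S * T₁ * S) - S * S) w⟫_ℝ ≤ -((1 - γ) * ‖S w‖ ^ 2) := by
  have hS_symm : ∀ x y : H, ⟪x, S y⟫_ℝ = ⟪S x, y⟫_ℝ := fun x y => (hS.isSymmetric x y).symm
  have hconj : ⟪w, (S * T₁ * S) w⟫_ℝ ≤ ‖S w‖ ^ 2 :=
    calc ⟪w, (S * T₁ * S) w⟫_ℝ = ⟪S w, T₁ (S w)⟫_ℝ := hS_symm _ _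
      _ ≤ ‖S w‖ * ‖T₁ (S w)‖ := real_inner_le_norm _ _
      _ ≤ ‖S w‖ * ‖S w‖ := by gcongr; simpa using T₁.le_of_opNorm_le hT₁ (S w)
      _ = ‖S w‖ ^ 2 := (sq _).symm
  have hsq : ⟪w, (S * S) w⟫_ℝ = ‖S w‖ ^ 2 := by
    rw [mul_apply_eq_comp, hS_symm, real_inner_self_eq_norm_sq]
  simp only [sub_apply, smul_apply, inner_sub_right, real_inner_smul_right, hsq]
  nlinarith [mul_le_mul_of_nonneg_left hconj hγ]

theorem norm_sq_add_two_integral_le_of_hasDerivAt {E : Type*} [NormedAddCommGroup E]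
    [InnerProductSpace ℝ E] {A : E → E} {q : E → ℝ} (hA : Continuous A) (hq : Continuous q)
    (hdiss : ∀ w, ⟪w, A w⟫_ℝ ≤ -q w) {W : ℝ → E} {a b : ℝ} (hab : a ≤ b)
    (hW : ∀ t ∈ Icc a b, HasDerivAt W (A (W t)) t) :
    ‖W b‖ ^ 2 + 2 * ∫ t in a..b, q (W t) ≤ ‖W a‖ ^ 2 := by
  rw [← uIcc_of_le hab] at hW
  have hWc : ContinuousOn W (uIcc a b) := HasDerivAt.continuousOn hW
  have hint : IntervalIntegrable (fun t => 2 * ⟪W t, A (W t)⟫_ℝ) volume a b :=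
    ((hWc.inner (hA.comp_continuousOn hWc)).const_smul (2 : ℝ)).intervalIntegrable
  have hftc : ∫ t in a..b, 2 * ⟪W t, A (W t)⟫_ℝ = ‖W b‖ ^ 2 - ‖W a‖ ^ 2 :=
    integral_eq_sub_of_hasDerivAt (fun t ht => (hW t ht).norm_sq) hint
  have hmono : ∫ t in a..b, 2 * ⟪W t, A (W t)⟫_ℝ ≤ ∫ t in a..b, -(2 * q (W t)) :=
    integral_mono_on hab hint
      ((hq.comp_continuousOn hWc).const_smul (2 : ℝ)).neg.intervalIntegrable
      fun t _ => by linarith [hdiss (W t)]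
  rw [hftc, integral_neg, integral_const_mul] at hmono
  linarith

theorem norm_sq_inv_smul_intervalIntegral_le {E : Type*} [NormedAddCommGroup E]
    [NormedSpace ℝ E] [CompleteSpace E] {f : ℝ → E} {a b : ℝ}
    (hf : IntervalIntegrable f volume a b)
    (hf2 : IntervalIntegrable (fun t => ‖f t‖ ^ 2) volume a b) :
    ‖(b - a)⁻¹ • ∫ t in a..b, f t‖ ^ 2 ≤ (b - a)⁻¹ * ∫ t in a..b, ‖f t‖ ^ 2 := by
  rcases eq_or_ne a b with rfl | hab
  · simp
  rw [← smul_eq_mul, ← interval_average_eq, ← interval_average_eq]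
  refine ((convexOn_univ_norm (E := E)).pow (fun _ _ => norm_nonneg _) 2).map_set_average_le
    (continuous_norm.pow 2).continuousOn isClosed_univ ?_ ?_ (by simp) hf.def' hf2.def'
  · simpa [Real.volume_uIoc, sub_eq_zero] using hab.symm
  · simp [Real.volume_uIoc]

theorem inv_smul_intervalIntegral_sub_const {E : Type*} [NormedAddCommGroup E]
    [NormedSpace ℝ E] [CompleteSpace E] {f : ℝ → E} {a b : ℝ} (hab : a ≠ b)
    (hf : IntervalIntegrable f volume a b) (c : E) :
    (b - a)⁻¹ • (∫ t in a..b, f t) - c = (b - a)⁻¹ • ∫ t in a..b, (f t - c) := by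
  rw [integral_sub hf intervalIntegrable_const, integral_const, smul_sub, smul_smul,
    inv_mul_cancel₀ (sub_ne_zero.mpr hab.symm), one_smul]

theorem td_ode_polyak_ruppert_rate_general
    {H : Type*} [NormedAddCommGroup H] [InnerProductSpace ℝ H] [CompleteSpace H]
    (Sig S T1 Sig1 : H →L[ℝ] H)
    (hSsa : IsSelfAdjoint S) (hSsq : S * S = Sig)
    (hT1 : ‖T1‖ ≤ 1) (hSig1 : Sig1 = S * T1 * S)
    (γ : ℝ) (hγ0 : 0 ≤ γ) (hγ1 : γ < 1) (b : H)
    (Vstar : H) (hVstar : b + (γ • Sig1 - Sig) Vstar = 0)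
    (V : ℝ → H) (hV0 : V 0 = 0)
    (hODE : ∀ t : ℝ, 0 ≤ t → HasDerivAt V ((γ • Sig1 - Sig) (V t) + b) t)
    (T : ℝ) (hT : 0 < T) :
    ‖S ((T⁻¹ • ∫ t in (0:ℝ)..T, V t) - Vstar)‖ ^ 2 ≤ ‖Vstar‖ ^ 2 / (2 * (1 - γ) * T) := by
  subst hSsq hSig1
  set A := γ • (S * T1 * S) - S * S
  have hW : ∀ t ∈ Icc 0 T, HasDerivAt (V · - Vstar) (A (V t - Vstar)) t := fun t ht => by
    simpa [map_sub, eq_neg_of_add_eq_zero_right hVstar] using (hODE t ht.1).sub_const Vstar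
  have hVcont : ContinuousOn V (uIcc 0 T) :=
    HasDerivAt.continuousOn fun t ht => hODE t (uIcc_of_le hT.le ▸ ht).1
  have hSWcont : ContinuousOn (fun t => S (V t - Vstar)) (uIcc 0 T) :=
    S.continuous.comp_continuousOn (hVcont.sub continuousOn_const)
  have henergy := norm_sq_add_two_integral_le_of_hasDerivAt (q := fun w => (1 - γ) * ‖S w‖ ^ 2)
    A.continuous (by fun_prop)
    (hSsa.real_inner_smul_conj_sub_mul_self_le hT1 hγ0) hT.le hW
  rw [integral_const_mul, hV0, zero_sub, norm_neg] at henergy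
  have hbound : ∫ t in 0..T, ‖S (V t - Vstar)‖ ^ 2 ≤ ‖Vstar‖ ^ 2 / (2 * (1 - γ)) := by
    rw [le_div_iff₀ (by linarith)]
    linarith [sq_nonneg ‖V T - Vstar‖]
  calc ‖S ((T⁻¹ • ∫ t in (0:ℝ)..T, V t) - Vstar)‖ ^ 2
      = ‖(T - 0)⁻¹ • ∫ t in 0..T, S (V t - Vstar)‖ ^ 2 := by
        rw [S.intervalIntegral_comp_comm (hVcont.intervalIntegrable.sub intervalIntegrable_const),
          ← map_smul, ← inv_smul_intervalIntegral_sub_const hT.ne hVcont.intervalIntegrable,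
          sub_zero]
    _ ≤ (T - 0)⁻¹ * ∫ t in 0..T, ‖S (V t - Vstar)‖ ^ 2 :=
        norm_sq_inv_smul_intervalIntegral_le hSWcont.intervalIntegrable
          (hSWcont.norm.pow 2).intervalIntegrable
    _ ≤ T⁻¹ * (‖Vstar‖ ^ 2 / (2 * (1 - γ))) := by rw [sub_zero]; gcongr
    _ = ‖Vstar‖ ^ 2 / (2 * (1 - γ) * T) := by field_simp

/-- Prop. 6, unregularized case: assume `V*` satisfies
`b + (γΣ₁ - Σ)V* = 0` and `V : ℝ → H` is differentiable with `V(0) = 0` and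
`V'(t) = (γΣ₁ - Σ)V(t) + b` for all `t ≥ 0`.  Then for every `T > 0`, the Polyak–Ruppert
average `V̄_T = (1/T)∫₀ᵀ V(t) dt` satisfies
`‖Σ^{1/2}(V̄_T - V*)‖² ≤ ‖V*‖² / (2(1-γ)T)`. -/
theorem td_ode_polyak_ruppert_rate
    {H : Type*} [NormedAddCommGroup H] [InnerProductSpace ℝ H] [CompleteSpace H]
    (Sig S T1 Sig1 : H →L[ℝ] H)
    (hSigSA : IsSelfAdjoint Sig) (hSigPos : ∀ f : H, 0 ≤ ⟪f, Sig f⟫_ℝ)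
    (hSsa : IsSelfAdjoint S) (hSpos : ∀ f : H, 0 ≤ ⟪f, S f⟫_ℝ) (hSsq : S * S = Sig)
    (hT1 : ‖T1‖ ≤ 1) (hSig1 : Sig1 = S * T1 * S)
    (γ : ℝ) (hγ0 : 0 ≤ γ) (hγ1 : γ < 1) (b : H)
    (Vstar : H) (hVstar : b + (γ • Sig1 - Sig) Vstar = 0)
    (V : ℝ → H) (hVdiff : Differentiable ℝ V) (hV0 : V 0 = 0)
    (hODE : ∀ t : ℝ, 0 ≤ t → HasDerivAt V ((γ • Sig1 - Sig) (V t) + b) t)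
    (T : ℝ) (hT : 0 < T) :
    ‖S ((T⁻¹ • ∫ t in (0:ℝ)..T, V t) - Vstar)‖ ^ 2 ≤ ‖Vstar‖ ^ 2 / (2 * (1 - γ) * T) :=
  td_ode_polyak_ruppert_rate_general Sig S T1 Sig1 hSsa hSsq hT1 hSig1 γ hγ0 hγ1 b Vstar hVstar V
    hV0 hODE T hT
end

section
/- Let λ > 0 and V*_λ := (Σ + λI − γΣ₁)^{-1} b. Let V : ℝ → H be differentiable with V(0) = 0 and V′(t) = (γΣ₁ − Σ − λI)V(t) + b for all t ≥ 0. Then for every T ≥ 0, ‖V(T) − V*_λ‖² ≤ ‖V*_λ‖² · e^{−2λT}. -/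
open scoped InnerProductSpace

/-!
Writing `W = V - V*_λ`, the ODE becomes `W' = A W` with `A = γΣ₁ - Σ - λI`. For every `f`,
`⟪f, Σ₁ f⟫ = ⟪Σ^{1/2} f, Σ̃₁ Σ^{1/2} f⟫ ≤ ‖Σ^{1/2} f‖² = ⟪f, Σ f⟫`, so `⟪f, A f⟫ ≤ -λ‖f‖²` as
`0 ≤ γ ≤ 1`. Hence `t ↦ e^{2λt} ‖W t‖²` has nonpositive derivative, so it is antitone on
`[0, ∞)`, and `W 0 = -V*_λ`.
-/

section Dissipativity

variable {E : Type*} [NormedAddCommGroup E] [InnerProductSpace ℝ E] [CompleteSpace E]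
  {S T : E →L[ℝ] E}

theorem inner_mul_self_apply_eq_norm_sq (hS : IsSelfAdjoint S) (f : E) :
    ⟪f, (S * S) f⟫_ℝ = ‖S f‖ ^ 2 :=
  (hS.isSymmetric f (S f)).symm.trans (real_inner_self_eq_norm_sq _)

theorem inner_mul_mul_apply_le_norm_sq (hS : IsSelfAdjoint S) (hT : ‖T‖ ≤ 1) (f : E) :
    ⟪f, (S * T * S) f⟫_ℝ ≤ ‖S f‖ ^ 2 :=
  calc ⟪f, (S * T * S) f⟫_ℝ = ⟪S f, T (S f)⟫_ℝ := (hS.isSymmetric f (T (S f))).symm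
    _ ≤ ‖S f‖ * ‖T (S f)‖ := real_inner_le_norm _ _
    _ ≤ ‖S f‖ * (1 * ‖S f‖) := by gcongr; exact T.le_of_opNorm_le hT _
    _ = ‖S f‖ ^ 2 := by ring

theorem inner_smul_mul_mul_sub_mul_self_sub_smul_one_apply_le (hS : IsSelfAdjoint S)
    (hT : ‖T‖ ≤ 1) {γ : ℝ} (hγ0 : 0 ≤ γ) (hγ1 : γ ≤ 1) (c : ℝ) (f : E) :
    ⟪f, (γ • (S * T * S) - S * S - c • 1) f⟫_ℝ ≤ -c * ‖f‖ ^ 2 := by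
  have hST := mul_le_mul_of_nonneg_left (inner_mul_mul_apply_le_norm_sq hS hT f) hγ0
  have hSf := mul_le_mul_of_nonneg_right hγ1 (sq_nonneg ‖S f‖)
  simp only [sub_apply, smul_apply, one_apply_eq_self, inner_sub_right, inner_smul_right,
    inner_mul_self_apply_eq_norm_sq hS, real_inner_self_eq_norm_sq]
  linarith

end Dissipativity

theorem norm_sq_le_mul_exp_of_inner_deriv_le {E : Type*} [NormedAddCommGroup E]
    [InnerProductSpace ℝ E] {W W' : ℝ → E} {c : ℝ}
    (hW : ∀ t, 0 ≤ t → HasDerivAt W (W' t) t)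
    (hdiss : ∀ t, 0 ≤ t → ⟪W t, W' t⟫_ℝ ≤ -c * ‖W t‖ ^ 2) {T : ℝ} (hT : 0 ≤ T) :
    ‖W T‖ ^ 2 ≤ ‖W 0‖ ^ 2 * Real.exp (-2 * c * T) := by
  set g : ℝ → ℝ := fun t => Real.exp (2 * c * t) * ‖W t‖ ^ 2
  have hg : ∀ t, 0 ≤ t → HasDerivAt g
      (Real.exp (2 * c * t) * (2 * (c * ‖W t‖ ^ 2 + ⟪W t, W' t⟫_ℝ))) t := fun t ht => by
    have hexp : HasDerivAt (fun s => Real.exp (2 * c * s)) (Real.exp (2 * c * t) * (2 * c)) t := by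
      simpa using ((hasDerivAt_id t).const_mul (2 * c)).exp
    exact (hexp.mul (hW t ht).norm_sq).congr_deriv (by ring)
  have hanti : AntitoneOn g (Set.Ici 0) := by
    refine antitoneOn_of_hasDerivWithinAt_nonpos (convex_Ici 0)
      (fun t ht => (hg t ht).continuousAt.continuousWithinAt)
      (fun t ht => (hg t (interior_subset ht)).hasDerivWithinAt) fun t ht => ?_
    have := hdiss t (interior_subset ht)
    have := Real.exp_pos (2 * c * t)
    nlinarith
  have hgT : Real.exp (2 * c * T) * ‖W T‖ ^ 2 ≤ ‖W 0‖ ^ 2 := by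
    simpa [g] using hanti Set.self_mem_Ici hT hT
  rw [neg_mul, neg_mul, Real.exp_neg, ← div_eq_mul_inv, le_div_iff₀ (Real.exp_pos _)]
  linarith

theorem td_ode_linear_convergence_general
    {H : Type*} [NormedAddCommGroup H] [InnerProductSpace ℝ H] [CompleteSpace H]
    (Sig S T1 Sig1 : H →L[ℝ] H)
    (hSsa : IsSelfAdjoint S) (hSsq : S * S = Sig)
    (hT1 : ‖T1‖ ≤ 1) (hSig1 : Sig1 = S * T1 * S)
    (γ : ℝ) (hγ0 : 0 ≤ γ) (hγ1 : γ < 1) (b : H)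
    (lam : ℝ)
    (Vlam : H) (hVlam : (Sig + lam • 1 - γ • Sig1) Vlam = b)
    (V : ℝ → H) (hV0 : V 0 = 0)
    (hODE : ∀ t : ℝ, 0 ≤ t → HasDerivAt V ((γ • Sig1 - Sig - lam • 1) (V t) + b) t)
    (T : ℝ) (hT : 0 ≤ T) :
    ‖V T - Vlam‖ ^ 2 ≤ ‖Vlam‖ ^ 2 * Real.exp (-2 * lam * T) := by
  subst hSsq hSig1
  set A := γ • (S * T1 * S) - S * S - lam • 1
  have hAVlam : A Vlam = -b := by
    rw [← hVlam, ← neg_sub, ← neg_apply]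
    congr 1
    simp only [A]
    abel
  have hW : ∀ t, 0 ≤ t → HasDerivAt (fun s => V s - Vlam) (A (V t - Vlam)) t := fun t ht => by
    simpa only [map_sub, hAVlam, sub_neg_eq_add] using (hODE t ht).sub_const Vlam
  simpa [hV0] using norm_sq_le_mul_exp_of_inner_deriv_le hW
    (fun t _ => inner_smul_mul_mul_sub_mul_self_sub_smul_one_apply_le hSsa hT1 hγ0 hγ1.le lam _)
    hT

/-- Prop. 6, regularized case: let `λ > 0`,
`V*_λ = (Σ + λI - γΣ₁)⁻¹ b` (characterized by `(Σ + λI - γΣ₁) V*_λ = b`), and let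
`V : ℝ → H` be differentiable with `V(0) = 0` and `V'(t) = (γΣ₁ - Σ - λI)V(t) + b`
for all `t ≥ 0`.  Then for every `T ≥ 0`, `‖V(T) - V*_λ‖² ≤ ‖V*_λ‖² e^{-2λT}`. -/
theorem td_ode_linear_convergence
    {H : Type*} [NormedAddCommGroup H] [InnerProductSpace ℝ H] [CompleteSpace H]
    (Sig S T1 Sig1 : H →L[ℝ] H)
    (hSigSA : IsSelfAdjoint Sig) (hSigPos : ∀ f : H, 0 ≤ ⟪f, Sig f⟫_ℝ)
    (hSsa : IsSelfAdjoint S) (hSpos : ∀ f : H, 0 ≤ ⟪f, S f⟫_ℝ) (hSsq : S * S = Sig)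
    (hT1 : ‖T1‖ ≤ 1) (hSig1 : Sig1 = S * T1 * S)
    (γ : ℝ) (hγ0 : 0 ≤ γ) (hγ1 : γ < 1) (b : H)
    (lam : ℝ) (hlam : 0 < lam)
    (Vlam : H) (hVlam : (Sig + lam • 1 - γ • Sig1) Vlam = b)
    (V : ℝ → H) (hVdiff : Differentiable ℝ V) (hV0 : V 0 = 0)
    (hODE : ∀ t : ℝ, 0 ≤ t → HasDerivAt V ((γ • Sig1 - Sig - lam • 1) (V t) + b) t)
    (T : ℝ) (hT : 0 ≤ T) :
    ‖V T - Vlam‖ ^ 2 ≤ ‖Vlam‖ ^ 2 * Real.exp (-2 * lam * T) :=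
  td_ode_linear_convergence_general Sig S T1 Sig1 hSsa hSsq hT1 hSig1 γ hγ0 hγ1 b lam Vlam hVlam V
    hV0 hODE T hT
end

section
/- Let λ > 0 and V*_λ := (Σ + λI − γΣ₁)^{-1} b. Then the variance of the TD update at the regularized optimum is bounded by σ²: E[‖(R + γ⟨V*_λ, X′⟩ − ⟨V*_λ, X⟩)·X − λ·V*_λ‖²] ≤ σ². -/
open MeasureTheory ProbabilityTheory
open scoped InnerProductSpace

private lemma td_aux_hA (γ a s c1 t : ℝ) (hγ0 : 0 ≤ γ) (ht : (1 - γ) * t = 1)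
    (ht0 : 0 < t) (h5 : a ^ 2 - γ * c1 ≤ (1 + γ) * (a * s)) :
    (1 + γ ^ 2) * a ^ 2 - 2 * γ * c1 ≤ (1 + γ) * t * s ^ 2 := by
  have exp1 : (1 + γ) * t * (s - (1 - γ) * a) ^ 2
      = (1 + γ) * t * s ^ 2 - 2 * (1 + γ) * (a * s) + (1 + γ) * (1 - γ) * a ^ 2 := by
    linear_combination ((1 + γ) * ((1 - γ) * a ^ 2 - 2 * a * s)) * ht
  have hP1 : 0 ≤ (1 + γ) * t * (s - (1 - γ) * a) ^ 2 := by positivity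
  nlinarith [exp1, hP1, h5]

private lemma td_aux_scalar (M γ ER2 s t : ℝ) (hM : 0 ≤ M) (hγ0 : 0 ≤ γ) (hγ1 : γ < 1)
    (hER2 : 0 ≤ ER2) (ht1 : 1 ≤ t) :
    M * (2 * ER2 + 2 * ((1 + γ) * t * s ^ 2))
      ≤ 10 * M * ER2 + (8 * (1 + γ ^ 2) * t ^ 2 + 16 * (1 + γ ^ 2)) * M * s ^ 2 := by
  have hfac2 : 2 * ((1 + γ) * t) ≤ 8 * (1 + γ ^ 2) * t ^ 2 + 16 * (1 + γ ^ 2) := by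
    nlinarith [sq_nonneg γ, sq_nonneg (t - 1)]
  nlinarith [mul_le_mul_of_nonneg_left hfac2 (mul_nonneg hM (sq_nonneg s)),
    mul_nonneg hM hER2]

set_option maxHeartbeats 1000000 in
/-- variance of the TD update at the regularized optimum: in the i.i.d.
setting, with `λ > 0` and `V*_λ = (Σ + λI - γΣ₁)⁻¹ b`,
`E[‖(R + γ⟪V*_λ, X'⟫ - ⟪V*_λ, X⟫)X - λV*_λ‖²] ≤ σ²`. -/
theorem td_variance_at_optimum_bound
    {H : Type*} [NormedAddCommGroup H] [InnerProductSpace ℝ H] [CompleteSpace H]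
    [MeasurableSpace H] [BorelSpace H]
    {Ω : Type*} [MeasurableSpace Ω] (P : Measure Ω) [IsProbabilityMeasure P]
    (M γ : ℝ) (hM : 0 < M) (hγ0 : 0 ≤ γ) (hγ1 : γ < 1)
    (X X' : Ω → H) (R : Ω → ℝ)
    (hXmeas : StronglyMeasurable X) (hX'meas : StronglyMeasurable X') (hRmeas : Measurable R)
    (hid : IdentDistrib X X' P P)
    (hXb : ∀ᵐ ω ∂P, ‖X ω‖ ≤ Real.sqrt M) (hX'b : ∀ᵐ ω ∂P, ‖X' ω‖ ≤ Real.sqrt M)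
    (hR2 : Integrable (fun ω => (R ω) ^ 2) P)
    (Sig Sig1 : H →L[ℝ] H)
    (hSig : ∀ f g : H, ⟪f, Sig g⟫_ℝ = ∫ ω, ⟪f, X ω⟫_ℝ * ⟪g, X ω⟫_ℝ ∂P)
    (hSig1 : ∀ f g : H, ⟪f, Sig1 g⟫_ℝ = ∫ ω, ⟪f, X ω⟫_ℝ * ⟪g, X' ω⟫_ℝ ∂P)
    (S : H →L[ℝ] H) (hSsa : IsSelfAdjoint S) (hSpos : ∀ f : H, 0 ≤ ⟪f, S f⟫_ℝ)
    (hSsq : S * S = Sig)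
    (b : H) (hb : b = ∫ ω, R ω • X ω ∂P)
    (T1 : H →L[ℝ] H) (hT1 : ‖T1‖ ≤ 1) (hfac : Sig1 = S * T1 * S)
    (Vstar : H) (hVstar : b + (γ • Sig1 - Sig) Vstar = 0)
    (σ2 : ℝ)
    (hσ2 : σ2 = 10 * M * (∫ ω, (R ω) ^ 2 ∂P) +
      (8 * (1 + γ ^ 2) / (1 - γ) ^ 2 + 16 * (1 + γ ^ 2)) * M * ‖S Vstar‖ ^ 2)
    (lam : ℝ) (hlam : 0 < lam)
    (Vlam : H) (hVlam : (Sig + lam • 1 - γ • Sig1) Vlam = b) :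
    ∫ ω, ‖(R ω + γ * ⟪Vlam, X' ω⟫_ℝ - ⟪Vlam, X ω⟫_ℝ) • X ω - lam • Vlam‖ ^ 2 ∂P ≤ σ2 := by
  have h1γ : (0:ℝ) < 1 - γ := by linarith
  set a : ℝ := ‖S Vlam‖ with ha_def
  set s : ℝ := ‖S Vstar‖ with hs_def
  set c1 : ℝ := ⟪Vlam, Sig1 Vlam⟫_ℝ with hc1_def
  set ER2 : ℝ := ∫ ω, (R ω) ^ 2 ∂P with hER2_def
  have hER2nn : 0 ≤ ER2 := integral_nonneg fun ω => sq_nonneg _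
  -- measurability of scalar functions
  have hinnerCont : ∀ v : H, Continuous (fun x : H => ⟪v, x⟫_ℝ) :=
    fun v => continuous_const.inner continuous_id
  have hum : Measurable (fun ω => ⟪Vlam, X ω⟫_ℝ) :=
    ((hinnerCont Vlam).measurable).comp hXmeas.measurable
  have hu'm : Measurable (fun ω => ⟪Vlam, X' ω⟫_ℝ) :=
    ((hinnerCont Vlam).measurable).comp hX'meas.measurable
  have hqm : Measurable (fun ω => R ω + γ * ⟪Vlam, X' ω⟫_ℝ - ⟪Vlam, X ω⟫_ℝ) :=
    (hRmeas.add (hu'm.const_mul γ)).sub hum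
  have hXnm : Measurable (fun ω => ‖X ω‖) := hXmeas.measurable.norm
  -- a.e. bounds
  have hsqrtM : (0:ℝ) ≤ Real.sqrt M := Real.sqrt_nonneg M
  set K : ℝ := ‖Vlam‖ * Real.sqrt M with hK_def
  have hK0 : 0 ≤ K := mul_nonneg (norm_nonneg _) hsqrtM
  have huB : ∀ᵐ ω ∂P, |⟪Vlam, X ω⟫_ℝ| ≤ K := by
    filter_upwards [hXb] with ω h
    exact le_trans (abs_real_inner_le_norm _ _) (mul_le_mul_of_nonneg_left h (norm_nonneg _))
  have hu'B : ∀ᵐ ω ∂P, |⟪Vlam, X' ω⟫_ℝ| ≤ K := by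
    filter_upwards [hX'b] with ω h
    exact le_trans (abs_real_inner_le_norm _ _) (mul_le_mul_of_nonneg_left h (norm_nonneg _))
  have hXM : ∀ᵐ ω ∂P, ‖X ω‖ ^ 2 ≤ M := by
    filter_upwards [hXb] with ω h
    nlinarith [Real.sq_sqrt hM.le, norm_nonneg (X ω)]
  -- |R| integrable
  have hRint : Integrable R P := by
    refine ((integrable_const (1:ℝ)).add hR2).mono' hRmeas.aestronglyMeasurable ?_
    filter_upwards with ω
    simp only [Pi.add_apply, Real.norm_eq_abs]
    nlinarith [sq_nonneg (|R ω| - 1), sq_abs (R ω)]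
  -- integrability of the various scalar functions
  have Iu2 : Integrable (fun ω => ⟪Vlam, X ω⟫_ℝ ^ 2) P := by
    refine (integrable_const (K ^ 2)).mono' ((hum.pow_const 2).aestronglyMeasurable) ?_
    filter_upwards [huB] with ω h
    simp only [Real.norm_eq_abs, abs_pow]
    nlinarith [abs_nonneg (⟪Vlam, X ω⟫_ℝ)]
  have Iu'2 : Integrable (fun ω => ⟪Vlam, X' ω⟫_ℝ ^ 2) P := by
    refine (integrable_const (K ^ 2)).mono' ((hu'm.pow_const 2).aestronglyMeasurable) ?_
    filter_upwards [hu'B] with ω h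
    simp only [Real.norm_eq_abs, abs_pow]
    nlinarith [abs_nonneg (⟪Vlam, X' ω⟫_ℝ)]
  have Iuu' : Integrable (fun ω => ⟪Vlam, X ω⟫_ℝ * ⟪Vlam, X' ω⟫_ℝ) P := by
    refine (integrable_const (K ^ 2)).mono' ((hum.mul hu'm).aestronglyMeasurable) ?_
    filter_upwards [huB, hu'B] with ω h1 h2
    simp only [Real.norm_eq_abs, abs_mul]
    nlinarith [abs_nonneg (⟪Vlam, X ω⟫_ℝ), abs_nonneg (⟪Vlam, X' ω⟫_ℝ)]
  have IRu : Integrable (fun ω => R ω * ⟪Vlam, X ω⟫_ℝ) P := by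
    refine ((hRint.abs).const_mul K).mono' ((hRmeas.mul hum).aestronglyMeasurable) ?_
    filter_upwards [huB] with ω h
    simp only [Real.norm_eq_abs, abs_mul]
    calc |R ω| * |⟪Vlam, X ω⟫_ℝ| ≤ |R ω| * K := mul_le_mul_of_nonneg_left h (abs_nonneg _)
      _ = K * |R ω| := mul_comm _ _
  have Iq2 : Integrable (fun ω => (R ω + γ * ⟪Vlam, X' ω⟫_ℝ - ⟪Vlam, X ω⟫_ℝ) ^ 2) P := by
    refine (((hR2.const_mul 3).add ((Iu'2.const_mul (3 * γ ^ 2)))).add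
      (Iu2.const_mul 3)).mono' ((hqm.pow_const 2).aestronglyMeasurable) ?_
    filter_upwards with ω
    simp only [Pi.add_apply, Real.norm_eq_abs, abs_pow, sq_abs]
    nlinarith [sq_nonneg (R ω - γ * ⟪Vlam, X' ω⟫_ℝ), sq_nonneg (R ω + ⟪Vlam, X ω⟫_ℝ),
      sq_nonneg (γ * ⟪Vlam, X' ω⟫_ℝ + ⟪Vlam, X ω⟫_ℝ)]
  have Iq2X : Integrable
      (fun ω => (R ω + γ * ⟪Vlam, X' ω⟫_ℝ - ⟪Vlam, X ω⟫_ℝ) ^ 2 * ‖X ω‖ ^ 2) P := by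
    refine (Iq2.const_mul M).mono'
      (((hqm.pow_const 2).mul (hXnm.pow_const 2)).aestronglyMeasurable) ?_
    filter_upwards [hXM] with ω h
    simp only [Real.norm_eq_abs]
    rw [abs_mul, abs_of_nonneg (sq_nonneg _), abs_of_nonneg (sq_nonneg _)]
    calc (R ω + γ * ⟪Vlam, X' ω⟫_ℝ - ⟪Vlam, X ω⟫_ℝ) ^ 2 * ‖X ω‖ ^ 2
        ≤ (R ω + γ * ⟪Vlam, X' ω⟫_ℝ - ⟪Vlam, X ω⟫_ℝ) ^ 2 * M :=
          mul_le_mul_of_nonneg_left h (sq_nonneg _)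
      _ = M * (R ω + γ * ⟪Vlam, X' ω⟫_ℝ - ⟪Vlam, X ω⟫_ℝ) ^ 2 := mul_comm _ _
  have Iqu : Integrable
      (fun ω => (R ω + γ * ⟪Vlam, X' ω⟫_ℝ - ⟪Vlam, X ω⟫_ℝ) * ⟪Vlam, X ω⟫_ℝ) P := by
    refine (Iq2.add Iu2).mono' ((hqm.mul hum).aestronglyMeasurable) ?_
    filter_upwards with ω
    simp only [Pi.add_apply, Real.norm_eq_abs, abs_mul]
    nlinarith [sq_nonneg (|R ω + γ * ⟪Vlam, X' ω⟫_ℝ - ⟪Vlam, X ω⟫_ℝ| - |⟪Vlam, X ω⟫_ℝ|),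
      sq_abs (R ω + γ * ⟪Vlam, X' ω⟫_ℝ - ⟪Vlam, X ω⟫_ℝ), sq_abs (⟪Vlam, X ω⟫_ℝ),
      abs_nonneg (R ω + γ * ⟪Vlam, X' ω⟫_ℝ - ⟪Vlam, X ω⟫_ℝ), abs_nonneg (⟪Vlam, X ω⟫_ℝ)]
  have IRX : Integrable (fun ω => R ω • X ω) P := by
    refine ((hRint.abs).const_mul (Real.sqrt M)).mono'
      (hRmeas.aestronglyMeasurable.smul hXmeas.aestronglyMeasurable) ?_
    filter_upwards [hXb] with ω h
    rw [norm_smul, Real.norm_eq_abs]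
    calc |R ω| * ‖X ω‖ ≤ |R ω| * Real.sqrt M := mul_le_mul_of_nonneg_left h (abs_nonneg _)
      _ = Real.sqrt M * |R ω| := mul_comm _ _
  -- operator identities
  have hSigS : ∀ f g : H, ⟪f, Sig g⟫_ℝ = ⟪S f, S g⟫_ℝ := by
    intro f g
    rw [← hSsq, ContinuousLinearMap.mul_apply]
    exact (hSsa.isSymmetric f (S g)).symm
  have hSig1S : ∀ f g : H, ⟪f, Sig1 g⟫_ℝ = ⟪S f, T1 (S g)⟫_ℝ := by
    intro f g
    rw [hfac, ContinuousLinearMap.mul_apply, ContinuousLinearMap.mul_apply]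
    exact (hSsa.isSymmetric f (T1 (S g))).symm
  -- integral identities
  have hIu2 : ∫ ω, ⟪Vlam, X ω⟫_ℝ ^ 2 ∂P = a ^ 2 := by
    have h := hSig Vlam Vlam
    rw [hSigS] at h
    rw [show (fun ω => ⟪Vlam, X ω⟫_ℝ ^ 2) = fun ω => ⟪Vlam, X ω⟫_ℝ * ⟪Vlam, X ω⟫_ℝ from
      funext fun ω => pow_two (⟪Vlam, X ω⟫_ℝ), ← h, real_inner_self_eq_norm_sq]
  have hIuu' : ∫ ω, ⟪Vlam, X ω⟫_ℝ * ⟪Vlam, X' ω⟫_ℝ ∂P = c1 := (hSig1 Vlam Vlam).symm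
  have hIu'2 : ∫ ω, ⟪Vlam, X' ω⟫_ℝ ^ 2 ∂P = a ^ 2 := by
    have hcomp : IdentDistrib (fun ω => ⟪Vlam, X ω⟫_ℝ ^ 2) (fun ω => ⟪Vlam, X' ω⟫_ℝ ^ 2)
        P P := hid.comp (((hinnerCont Vlam).measurable).pow_const 2)
    rw [← hcomp.integral_eq, hIu2]
  have hIRu : ∫ ω, R ω * ⟪Vlam, X ω⟫_ℝ ∂P = ⟪Vlam, b⟫_ℝ := by
    rw [hb, ← integral_inner IRX Vlam]
    congr 1
    funext ω
    rw [real_inner_smul_right]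
  -- pairing the defining equation of Vlam with Vlam
  have hVlam' : a ^ 2 + lam * ‖Vlam‖ ^ 2 - γ * c1 = ⟪Vlam, b⟫_ℝ := by
    have h := congrArg (fun z => ⟪Vlam, z⟫_ℝ) hVlam
    simp only [ContinuousLinearMap.add_apply, ContinuousLinearMap.sub_apply,
      ContinuousLinearMap.smul_apply, ContinuousLinearMap.one_apply, inner_add_right,
      inner_sub_right, real_inner_smul_right] at h
    rw [real_inner_self_eq_norm_sq] at h
    rw [← h, hSigS, real_inner_self_eq_norm_sq, ← ha_def, ← hc1_def]
  -- Cauchy-Schwarz bound for ⟪Vlam, b⟫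
  have hbeq : b = Sig Vstar - γ • Sig1 Vstar := by
    have h := hVstar
    rw [ContinuousLinearMap.sub_apply, ContinuousLinearMap.smul_apply] at h
    have h2 := eq_neg_of_add_eq_zero_left h
    rw [h2, neg_sub]
  have hbV : ⟪Vlam, b⟫_ℝ ≤ (1 + γ) * (a * s) := by
    rw [hbeq, inner_sub_right, real_inner_smul_right, hSigS, hSig1S]
    have h1 : ⟪S Vlam, S Vstar⟫_ℝ ≤ a * s := real_inner_le_norm _ _
    have h2 : |⟪S Vlam, T1 (S Vstar)⟫_ℝ| ≤ a * s := by
      refine le_trans (abs_real_inner_le_norm _ _) ?_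
      refine mul_le_mul_of_nonneg_left ?_ (norm_nonneg _)
      calc ‖T1 (S Vstar)‖ ≤ ‖T1‖ * ‖S Vstar‖ := T1.le_opNorm _
        _ ≤ 1 * ‖S Vstar‖ := mul_le_mul_of_nonneg_right hT1 (norm_nonneg _)
        _ = s := one_mul _
    have h3 : -(a * s) ≤ ⟪S Vlam, T1 (S Vstar)⟫_ℝ := neg_le_of_abs_le h2
    nlinarith
  have h5' : a ^ 2 - γ * c1 ≤ (1 + γ) * (a * s) := by
    nlinarith [mul_nonneg hlam.le (sq_nonneg ‖Vlam‖)]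
  -- the mean of q ⬝ u is lam ‖Vlam‖²
  have hqu : ∫ ω, (R ω + γ * ⟪Vlam, X' ω⟫_ℝ - ⟪Vlam, X ω⟫_ℝ) * ⟪Vlam, X ω⟫_ℝ ∂P
      = lam * ‖Vlam‖ ^ 2 := by
    have hsplit : (fun ω => (R ω + γ * ⟪Vlam, X' ω⟫_ℝ - ⟪Vlam, X ω⟫_ℝ) * ⟪Vlam, X ω⟫_ℝ)
        = fun ω => (R ω * ⟪Vlam, X ω⟫_ℝ + γ * (⟪Vlam, X ω⟫_ℝ * ⟪Vlam, X' ω⟫_ℝ))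
          - ⟪Vlam, X ω⟫_ℝ ^ 2 := by
      funext ω; ring
    have IA : Integrable (fun ω => R ω * ⟪Vlam, X ω⟫_ℝ
        + γ * (⟪Vlam, X ω⟫_ℝ * ⟪Vlam, X' ω⟫_ℝ)) P := by
      exact IRu.add (Iuu'.const_mul γ)
    rw [hsplit, integral_sub IA Iu2,
      integral_add IRu (Iuu'.const_mul γ), integral_const_mul, hIRu, hIuu', hIu2]
    linarith [hVlam']
  -- expand the squared norm
  have hpt : (fun ω => ‖(R ω + γ * ⟪Vlam, X' ω⟫_ℝ - ⟪Vlam, X ω⟫_ℝ) • X ω - lam • Vlam‖ ^ 2)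
      = fun ω => ((R ω + γ * ⟪Vlam, X' ω⟫_ℝ - ⟪Vlam, X ω⟫_ℝ) ^ 2 * ‖X ω‖ ^ 2
        - 2 * lam * ((R ω + γ * ⟪Vlam, X' ω⟫_ℝ - ⟪Vlam, X ω⟫_ℝ) * ⟪Vlam, X ω⟫_ℝ))
        + lam ^ 2 * ‖Vlam‖ ^ 2 := by
    funext ω
    rw [norm_sub_sq_real, norm_smul, norm_smul, real_inner_smul_left, real_inner_smul_right]
    simp only [Real.norm_eq_abs, mul_pow, sq_abs, real_inner_comm (X ω) Vlam]
    ring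
  have hmain : ∫ ω, ‖(R ω + γ * ⟪Vlam, X' ω⟫_ℝ - ⟪Vlam, X ω⟫_ℝ) • X ω - lam • Vlam‖ ^ 2 ∂P
      = (∫ ω, (R ω + γ * ⟪Vlam, X' ω⟫_ℝ - ⟪Vlam, X ω⟫_ℝ) ^ 2 * ‖X ω‖ ^ 2 ∂P)
        - lam ^ 2 * ‖Vlam‖ ^ 2 := by
    rw [show (fun ω => ‖(R ω + γ * ⟪Vlam, X' ω⟫_ℝ - ⟪Vlam, X ω⟫_ℝ) • X ω - lam • Vlam‖ ^ 2)
        = _ from hpt]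
    have IC : Integrable (fun ω => (R ω + γ * ⟪Vlam, X' ω⟫_ℝ - ⟪Vlam, X ω⟫_ℝ) ^ 2 * ‖X ω‖ ^ 2
        - 2 * lam * ((R ω + γ * ⟪Vlam, X' ω⟫_ℝ - ⟪Vlam, X ω⟫_ℝ) * ⟪Vlam, X ω⟫_ℝ)) P := by
      exact Iq2X.sub (Iqu.const_mul (2 * lam))
    rw [integral_add IC (integrable_const _),
      integral_sub Iq2X (Iqu.const_mul (2 * lam)), integral_const_mul, hqu, integral_const]
    simp [measure_univ]
    ring
  -- bound ∫ q² ‖X‖² ≤ M ∫ q²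
  have hstep3 : ∫ ω, (R ω + γ * ⟪Vlam, X' ω⟫_ℝ - ⟪Vlam, X ω⟫_ℝ) ^ 2 * ‖X ω‖ ^ 2 ∂P
      ≤ M * ∫ ω, (R ω + γ * ⟪Vlam, X' ω⟫_ℝ - ⟪Vlam, X ω⟫_ℝ) ^ 2 ∂P := by
    rw [← integral_const_mul]
    refine integral_mono_ae Iq2X (Iq2.const_mul M) ?_
    filter_upwards [hXM] with ω h
    calc (R ω + γ * ⟪Vlam, X' ω⟫_ℝ - ⟪Vlam, X ω⟫_ℝ) ^ 2 * ‖X ω‖ ^ 2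
        ≤ (R ω + γ * ⟪Vlam, X' ω⟫_ℝ - ⟪Vlam, X ω⟫_ℝ) ^ 2 * M :=
          mul_le_mul_of_nonneg_left h (sq_nonneg _)
      _ = M * (R ω + γ * ⟪Vlam, X' ω⟫_ℝ - ⟪Vlam, X ω⟫_ℝ) ^ 2 := mul_comm _ _
  -- bound ∫ q² ≤ 2 ER2 + 2 ((1+γ²) a² - 2 γ c1)
  have hIe2 : ∫ ω, (γ * ⟪Vlam, X' ω⟫_ℝ - ⟪Vlam, X ω⟫_ℝ) ^ 2 ∂P
      = (1 + γ ^ 2) * a ^ 2 - 2 * γ * c1 := by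
    have hsplit : (fun ω => (γ * ⟪Vlam, X' ω⟫_ℝ - ⟪Vlam, X ω⟫_ℝ) ^ 2)
        = fun ω => (γ ^ 2 * ⟪Vlam, X' ω⟫_ℝ ^ 2 + ⟪Vlam, X ω⟫_ℝ ^ 2)
          - 2 * γ * (⟪Vlam, X ω⟫_ℝ * ⟪Vlam, X' ω⟫_ℝ) := by
      funext ω; ring
    have IB : Integrable (fun ω => γ ^ 2 * ⟪Vlam, X' ω⟫_ℝ ^ 2 + ⟪Vlam, X ω⟫_ℝ ^ 2) P := by
      exact (Iu'2.const_mul (γ ^ 2)).add Iu2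
    rw [hsplit, integral_sub IB (Iuu'.const_mul (2 * γ)),
      integral_add (Iu'2.const_mul (γ ^ 2)) Iu2, integral_const_mul, integral_const_mul,
      hIu'2, hIu2, hIuu']
    ring
  have Ie2 : Integrable (fun ω => (γ * ⟪Vlam, X' ω⟫_ℝ - ⟪Vlam, X ω⟫_ℝ) ^ 2) P := by
    have hsplit : (fun ω => (γ * ⟪Vlam, X' ω⟫_ℝ - ⟪Vlam, X ω⟫_ℝ) ^ 2)
        = fun ω => (γ ^ 2 * ⟪Vlam, X' ω⟫_ℝ ^ 2 + ⟪Vlam, X ω⟫_ℝ ^ 2)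
          - 2 * γ * (⟪Vlam, X ω⟫_ℝ * ⟪Vlam, X' ω⟫_ℝ) := by
      funext ω; ring
    rw [hsplit]
    exact ((Iu'2.const_mul (γ ^ 2)).add Iu2).sub (Iuu'.const_mul (2 * γ))
  have hstep4 : ∫ ω, (R ω + γ * ⟪Vlam, X' ω⟫_ℝ - ⟪Vlam, X ω⟫_ℝ) ^ 2 ∂P
      ≤ 2 * ER2 + 2 * ((1 + γ ^ 2) * a ^ 2 - 2 * γ * c1) := by
    have hmono : ∫ ω, (R ω + γ * ⟪Vlam, X' ω⟫_ℝ - ⟪Vlam, X ω⟫_ℝ) ^ 2 ∂P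
        ≤ ∫ ω, 2 * R ω ^ 2 + 2 * (γ * ⟪Vlam, X' ω⟫_ℝ - ⟪Vlam, X ω⟫_ℝ) ^ 2 ∂P := by
      have ID : Integrable (fun ω => 2 * R ω ^ 2
          + 2 * (γ * ⟪Vlam, X' ω⟫_ℝ - ⟪Vlam, X ω⟫_ℝ) ^ 2) P := by
        exact (hR2.const_mul 2).add (Ie2.const_mul 2)
      refine integral_mono_ae Iq2 ID ?_
      filter_upwards with ω
      nlinarith [sq_nonneg (R ω - (γ * ⟪Vlam, X' ω⟫_ℝ - ⟪Vlam, X ω⟫_ℝ))]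
    rw [integral_add (hR2.const_mul 2) (Ie2.const_mul 2), integral_const_mul,
      integral_const_mul, hIe2] at hmono
    linarith [hmono]
  -- scalar arithmetic finish
  set t : ℝ := (1 - γ)⁻¹ with ht_def
  have ht : (1 - γ) * t = 1 := mul_inv_cancel₀ h1γ.ne'
  have ht0 : 0 < t := inv_pos.mpr h1γ
  have ht1 : 1 ≤ t := by nlinarith
  have hA : (1 + γ ^ 2) * a ^ 2 - 2 * γ * c1 ≤ (1 + γ) * t * s ^ 2 :=
    td_aux_hA γ a s c1 t hγ0 ht ht0 h5'
  have hdiv : 8 * (1 + γ ^ 2) / (1 - γ) ^ 2 = 8 * (1 + γ ^ 2) * t ^ 2 := by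
    rw [ht_def]
    field_simp
  have hσ2' : σ2 = 10 * M * ER2 + (8 * (1 + γ ^ 2) * t ^ 2 + 16 * (1 + γ ^ 2)) * M * s ^ 2 := by
    rw [hσ2, hdiv]
  have hfinal : M * (2 * ER2 + 2 * ((1 + γ) * t * s ^ 2)) ≤ σ2 := by
    rw [hσ2']
    exact td_aux_scalar M γ ER2 s t hM.le hγ0 hγ1 hER2nn ht1
  have hchain : M * (∫ ω, (R ω + γ * ⟪Vlam, X' ω⟫_ℝ - ⟪Vlam, X ω⟫_ℝ) ^ 2 ∂P)
      ≤ M * (2 * ER2 + 2 * ((1 + γ) * t * s ^ 2)) := by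
    refine mul_le_mul_of_nonneg_left ?_ hM.le
    calc ∫ ω, (R ω + γ * ⟪Vlam, X' ω⟫_ℝ - ⟪Vlam, X ω⟫_ℝ) ^ 2 ∂P
        ≤ 2 * ER2 + 2 * ((1 + γ ^ 2) * a ^ 2 - 2 * γ * c1) := hstep4
      _ ≤ 2 * ER2 + 2 * ((1 + γ) * t * s ^ 2) := by linarith
  rw [hmain]
  have hnn : (0:ℝ) ≤ lam ^ 2 * ‖Vlam‖ ^ 2 := by positivity
  linarith only [hstep3, hchain, hfinal, hnn]
end
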